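/- arXiv:2207.01185 — 5 statements merged into one kernel-verified Lean document; each statement's English description precedes it below -/
import Mathlib

section
/- For every finitely supported sequence u : ℤ² → ℂ, the ⟨j⟩²-weighted resonant quadrilinear form is real: Im ( ∑_{(j,j1,j2,j3) ∈ R} ⟨j⟩² · u_j · conj(u_{j1}) · u_{j2} · conj(u_{j3}) ) = 0. -/
noncomputable section

/-- The Euclidean norm squared of a lattice point in `ℤ²`. -/
def nsq (j : ℤ × ℤ) : ℤ := j.1 ^ 2 + j.2 ^ 2

/-- The Japanese bracket squared `⟨j⟩² = 1 + |j|²`, as a complex number. -/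
def wt (j : ℤ × ℤ) : ℂ := ((1 + nsq j : ℤ) : ℂ)

/-- The resonance relation on quadruples in `(ℤ²)⁴`:
`j1 - j2 + j3 = j` and `|j1|² - |j2|² + |j3|² = |j|²`. -/
def Res (q : (ℤ × ℤ) × (ℤ × ℤ) × (ℤ × ℤ) × (ℤ × ℤ)) : Prop :=
  q.2.1 - q.2.2.1 + q.2.2.2 = q.1 ∧
    nsq q.2.1 - nsq q.2.2.1 + nsq q.2.2.2 = nsq q.1

instance : DecidablePred Res := fun q => by unfold Res; infer_instance

abbrev Q4 : Type := (ℤ × ℤ) × (ℤ × ℤ) × (ℤ × ℤ) × (ℤ × ℤ)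

/-- `(j,j1,j2,j3) ↦ (j1,j,j3,j2)`. -/
def e1 : Q4 ≃ Q4 where
  toFun q := (q.2.1, q.1, q.2.2.2, q.2.2.1)
  invFun q := (q.2.1, q.1, q.2.2.2, q.2.2.1)
  left_inv q := rfl
  right_inv q := rfl

/-- `(j,j1,j2,j3) ↦ (j2,j3,j,j1)`. -/
def e2 : Q4 ≃ Q4 where
  toFun q := (q.2.2.1, q.2.2.2, q.1, q.2.1)
  invFun q := (q.2.2.1, q.2.2.2, q.1, q.2.1)
  left_inv q := rfl
  right_inv q := rfl

/-- `(j,j1,j2,j3) ↦ (j3,j2,j1,j)`. -/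
def e3 : Q4 ≃ Q4 where
  toFun q := (q.2.2.2, q.2.2.1, q.2.1, q.1)
  invFun q := (q.2.2.2, q.2.2.1, q.2.1, q.1)
  left_inv q := rfl
  right_inv q := rfl

lemma res_e1 (q : Q4) : Res (e1 q) ↔ Res q := by
  simp only [Res, e1, Equiv.coe_fn_mk]
  constructor <;> rintro ⟨h1, h2⟩ <;>
    exact ⟨by linear_combination -h1, by linear_combination -h2⟩

lemma res_e2 (q : Q4) : Res (e2 q) ↔ Res q := by
  simp only [Res, e2, Equiv.coe_fn_mk]
  constructor <;> rintro ⟨h1, h2⟩ <;>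
    exact ⟨by linear_combination h1, by linear_combination h2⟩

lemma res_e3 (q : Q4) : Res (e3 q) ↔ Res q := by
  simp only [Res, e3, Equiv.coe_fn_mk]
  constructor <;> rintro ⟨h1, h2⟩ <;>
    exact ⟨by linear_combination -h1, by linear_combination -h2⟩

lemma wt_star (j : ℤ × ℤ) : (starRingEnd ℂ) (wt j) = wt j := by
  simp [wt]

lemma wt_res {q : Q4} (h : Res q) :
    wt q.1 + wt q.2.2.1 = wt q.2.1 + wt q.2.2.2 := by
  have key : (1 + nsq q.1) + (1 + nsq q.2.2.1)
      = (1 + nsq q.2.1) + (1 + nsq q.2.2.2) := by linarith [h.2]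
  unfold wt
  exact_mod_cast key

/-- For every finitely supported `u : ℤ² → ℂ`, the `⟨j⟩²`-weighted resonant
quadrilinear form is real. -/
theorem im_weighted_resonant_quadrilinear_eq_zero (u : ℤ × ℤ → ℂ)
    (hu : (Function.support u).Finite) :
    (∑' q : (ℤ × ℤ) × (ℤ × ℤ) × (ℤ × ℤ) × (ℤ × ℤ),
      if Res q then
        wt q.1 * (u q.1 * (starRingEnd ℂ) (u q.2.1) * u q.2.2.1 *
          (starRingEnd ℂ) (u q.2.2.2))
      else 0).im = 0 := by
  classical
  set f : Q4 → ℂ := fun q =>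
    if Res q then wt q.1 * (u q.1 * (starRingEnd ℂ) (u q.2.1) * u q.2.2.1 * (starRingEnd ℂ) (u q.2.2.2))
    else 0 with hfdef
  set g : Q4 → ℂ := fun q =>
    if Res q then wt q.2.2.1 * (u q.1 * (starRingEnd ℂ) (u q.2.1) * u q.2.2.1 * (starRingEnd ℂ) (u q.2.2.2))
    else 0 with hgdef
  set f1 : Q4 → ℂ := fun q =>
    if Res q then wt q.2.1 * ((starRingEnd ℂ) (u q.1) * u q.2.1 * (starRingEnd ℂ) (u q.2.2.1) * u q.2.2.2)
    else 0 with hf1def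
  set f3 : Q4 → ℂ := fun q =>
    if Res q then wt q.2.2.2 * ((starRingEnd ℂ) (u q.1) * u q.2.1 * (starRingEnd ℂ) (u q.2.2.1) * u q.2.2.2)
    else 0 with hf3def
  set s : Finset (ℤ × ℤ) := hu.toFinset with hs
  set F : Finset Q4 := s ×ˢ s ×ˢ s ×ˢ s with hF
  have hmem : ∀ q : Q4, q ∉ F →
      u q.1 = 0 ∨ u q.2.1 = 0 ∨ u q.2.2.1 = 0 ∨ u q.2.2.2 = 0 := by
    intro q hq
    simpa only [hF, hs, Finset.mem_product, Set.Finite.mem_toFinset,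
      Function.mem_support, not_and_or, not_not] using hq
  have hsumf : Summable f := by
    apply summable_of_ne_finset_zero (s := F)
    intro q hq
    have := hmem q hq
    simp only [hfdef]
    rcases this with h | h | h | h <;> simp [h]
  have hsumg : Summable g := by
    apply summable_of_ne_finset_zero (s := F)
    intro q hq
    have := hmem q hq
    simp only [hgdef]
    rcases this with h | h | h | h <;> simp [h]
  have hsumf1 : Summable f1 := by
    apply summable_of_ne_finset_zero (s := F)
    intro q hq
    have := hmem q hq
    simp only [hf1def]
    rcases this with h | h | h | h <;> simp [h]
  have hsumf3 : Summable f3 := by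
    apply summable_of_ne_finset_zero (s := F)
    intro q hq
    have := hmem q hq
    simp only [hf3def]
    rcases this with h | h | h | h <;> simp [h]
  have hg : ∑' q, f q = ∑' q, g q := by
    rw [← Equiv.tsum_eq e2 f]
    congr 1
    funext q
    have hres := res_e2 q
    by_cases h : Res q
    · rw [hfdef, hgdef]
      simp only [if_pos h, if_pos (hres.mpr h)]
      show wt q.2.2.1 * (u q.2.2.1 * (starRingEnd ℂ) (u q.2.2.2) * u q.1 * (starRingEnd ℂ) (u q.2.1)) = _
      ring
    · rw [hfdef, hgdef]
      simp only [if_neg h, if_neg (fun hh => h (hres.mp hh))]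
  have hf1 : ∑' q, f q = ∑' q, f1 q := by
    rw [← Equiv.tsum_eq e1 f]
    congr 1
    funext q
    have hres := res_e1 q
    by_cases h : Res q
    · rw [hfdef, hf1def]
      simp only [if_pos h, if_pos (hres.mpr h)]
      show wt q.2.1 * (u q.2.1 * (starRingEnd ℂ) (u q.1) * u q.2.2.2 * (starRingEnd ℂ) (u q.2.2.1)) = _
      ring
    · rw [hfdef, hf1def]
      simp only [if_neg h, if_neg (fun hh => h (hres.mp hh))]
  have hf3 : ∑' q, f q = ∑' q, f3 q := by
    rw [← Equiv.tsum_eq e3 f]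
    congr 1
    funext q
    have hres := res_e3 q
    by_cases h : Res q
    · rw [hfdef, hf3def]
      simp only [if_pos h, if_pos (hres.mpr h)]
      show wt q.2.2.2 * (u q.2.2.2 * (starRingEnd ℂ) (u q.2.2.1) * u q.2.1 * (starRingEnd ℂ) (u q.1)) = _
      ring
    · rw [hfdef, hf3def]
      simp only [if_neg h, if_neg (fun hh => h (hres.mp hh))]
  have hstar : ∀ q, star (f q + g q) = f1 q + f3 q := by
    intro q
    by_cases h : Res q
    · rw [hfdef, hgdef, hf1def, hf3def]
      simp only [if_pos h]
      rw [← add_mul, ← add_mul, wt_res h]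
      simp only [Complex.star_def, map_mul, map_add, wt_star, Complex.conj_conj]
    · rw [hfdef, hgdef, hf1def, hf3def]
      simp only [if_neg h, add_zero, star_zero]
  set S : ℂ := ∑' q, f q with hS
  have key : S + S = star (S + S) := by
    calc S + S = ∑' q, f1 q + ∑' q, f3 q := by rw [← hf1, ← hf3]
      _ = ∑' q, (f1 q + f3 q) := (Summable.tsum_add hsumf1 hsumf3).symm
      _ = ∑' q, star (f q + g q) := by
          congr 1; funext q; exact (hstar q).symm
      _ = star (∑' q, (f q + g q)) := tsum_star.symm
      _ = star (∑' q, f q + ∑' q, g q) := by rw [Summable.tsum_add hsumf hsumg]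
      _ = star (S + S) := by rw [← hg, ← hS]
  have him : (S + S).im = -(S + S).im := by
    conv_lhs => rw [key]
    rw [Complex.star_def, Complex.conj_im]
  have : S.im = 0 := by
    simp only [Complex.add_im] at him
    linarith
  exact this
end
end

section
/- For all finitely supported sequences v, w : ℤ² → ℂ, one has the cancellation: Im ( ∑_{(j,j1,j2,j3) ∈ R} ⟨j⟩² · [ conj(v_j)·w_{j1}·conj(w_{j2})·w_{j3} + conj(w_j)·v_{j1}·conj(w_{j2})·w_{j3} + conj(w_j)·w_{j1}·conj(v_{j2})·w_{j3} + conj(w_j)·w_{j1}·conj(w_{j2})·v_{j3} ] ) = 0; moreover this sum equals Im ( ∑_{(j,j1,j2,j3) ∈ R} (⟨j⟩² + ⟨j2⟩²) · [ conj(v_j)·w_{j1}·conj(w_{j2})·w_{j3} + conj(w_j)·v_{j1}·conj(w_{j2})·w_{j3} ] ). -/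
noncomputable section

/-!
Let `σ` be the involution `(j, j₁, j₂, j₃) ↦ (j₁, j, j₃, j₂)` and `ρ` the involution
`(j, j₁, j₂, j₃) ↦ (j₂, j₃, j, j₁)`; both preserve the resonant set. The variation `G` of
`w̄_j w_{j₁} w̄_{j₂} w_{j₃}` in the direction `v` is `ρ`-invariant, so (the sums being finite) the
`⟨j⟩²`-weighted sum is half the `(⟨j⟩² + ⟨j₂⟩²)`-weighted one. On the resonant set
`⟨j⟩² + ⟨j₂⟩² = ⟨j₁⟩² + ⟨j₃⟩²`, and `G ∘ σ = conj ∘ G`, so reindexing by `σ` shows that this sum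
is its own conjugate. The same reindexing shows that the two-slot sum is real, so both imaginary
parts in the second claim vanish.
-/

open ComplexConjugate

namespace Quadruple

variable {α : Type*}

def conjSwap : Equiv.Perm (α × α × α × α) :=
  Function.Involutive.toPerm (fun q => (q.2.1, q.1, q.2.2.2, q.2.2.1)) fun _ => rfl

theorem conjSwap_apply (q : α × α × α × α) : conjSwap q = (q.2.1, q.1, q.2.2.2, q.2.2.1) := rfl

def pairSwap : Equiv.Perm (α × α × α × α) :=
  Function.Involutive.toPerm (fun q => (q.2.2.1, q.2.2.2, q.1, q.2.1)) fun _ => rfl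

theorem pairSwap_apply (q : α × α × α × α) : pairSwap q = (q.2.2.1, q.2.2.2, q.1, q.2.1) := rfl

end Quadruple

open Quadruple

abbrev Quad := (ℤ × ℤ) × (ℤ × ℤ) × (ℤ × ℤ) × (ℤ × ℤ)

theorem res_conjSwap_iff (q : Quad) : Res (conjSwap q) ↔ Res q := by
  simp only [Res, conjSwap_apply]
  constructor <;> rintro ⟨h1, h2⟩ <;> exact ⟨by linear_combination -h1, by linear_combination -h2⟩

theorem res_pairSwap_iff (q : Quad) : Res (pairSwap q) ↔ Res q := by
  simp only [Res, pairSwap_apply]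
  constructor <;> rintro ⟨h1, h2⟩ <;> exact ⟨by linear_combination h1, by linear_combination h2⟩

theorem conj_wt (j : ℤ × ℤ) : conj (wt j) = wt j := by
  simp [wt]

theorem wt_add_wt_of_res {q : Quad} (h : Res q) :
    wt q.2.1 + wt q.2.2.2 = wt q.1 + wt q.2.2.1 := by
  have h2 : (nsq q.2.1 : ℂ) - nsq q.2.2.1 + nsq q.2.2.2 = nsq q.1 := by exact_mod_cast h.2
  simp only [wt]
  push_cast
  linear_combination h2

theorem Complex.im_tsum_eq_zero_of_conj_comp_perm {ι : Type*} (σ : Equiv.Perm ι) {f : ι → ℂ}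
    (hf : ∀ i, conj (f (σ i)) = f i) : (∑' i, f i).im = 0 := by
  rw [← Complex.conj_eq_iff_im, Complex.conj_tsum, ← σ.tsum_eq]
  exact tsum_congr hf

theorem Summable.tsum_add_comp_perm {ι M : Type*} [AddCommMonoid M] [TopologicalSpace M]
    [ContinuousAdd M] [T2Space M] {f : ι → M} (hf : Summable f) (σ : Equiv.Perm ι) :
    ∑' i, (f i + f (σ i)) = ∑' i, f i + ∑' i, f i := by
  exact (hf.tsum_add (σ.summable_iff.2 hf)).trans (congrArg _ (σ.tsum_eq f))

/-- The first variation of `q ↦ w̄_j w_{j₁} w̄_{j₂} w_{j₃}` in the direction `v`. -/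
def quarticVariation (v w : ℤ × ℤ → ℂ) (q : Quad) : ℂ :=
  conj (v q.1) * w q.2.1 * conj (w q.2.2.1) * w q.2.2.2 +
    conj (w q.1) * v q.2.1 * conj (w q.2.2.1) * w q.2.2.2 +
    conj (w q.1) * w q.2.1 * conj (v q.2.2.1) * w q.2.2.2 +
    conj (w q.1) * w q.2.1 * conj (w q.2.2.1) * v q.2.2.2

def quarticVariationFront (v w : ℤ × ℤ → ℂ) (q : Quad) : ℂ :=
  conj (v q.1) * w q.2.1 * conj (w q.2.2.1) * w q.2.2.2 +
    conj (w q.1) * v q.2.1 * conj (w q.2.2.1) * w q.2.2.2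

section Variation

variable (v w : ℤ × ℤ → ℂ)

theorem quarticVariation_pairSwap (q : Quad) :
    quarticVariation v w (pairSwap q) = quarticVariation v w q := by
  simp only [quarticVariation, pairSwap_apply]
  ring

theorem quarticVariation_conjSwap (q : Quad) :
    quarticVariation v w (conjSwap q) = conj (quarticVariation v w q) := by
  simp only [quarticVariation, conjSwap_apply, map_add, map_mul,
    Complex.conj_conj]
  ring

theorem quarticVariationFront_conjSwap (q : Quad) :
    quarticVariationFront v w (conjSwap q) = conj (quarticVariationFront v w q) := by
  simp only [quarticVariationFront, conjSwap_apply, map_add, map_mul,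
    Complex.conj_conj]
  ring

theorem support_quarticVariation_subset {S : Set (ℤ × ℤ)} (hv : Function.support v ⊆ S)
    (hw : Function.support w ⊆ S) :
    Function.support (quarticVariation v w) ⊆ S ×ˢ S ×ˢ S ×ˢ S := by
  have hvw : ∀ j ∉ S, v j = 0 ∧ w j = 0 := fun j hj =>
    ⟨Function.notMem_support.1 fun h => hj (hv h), Function.notMem_support.1 fun h => hj (hw h)⟩
  rintro ⟨a, b, c, d⟩ hq
  simp only [Set.mem_prod]
  refine ⟨?_, ?_, ?_, ?_⟩ <;> by_contra h <;> apply hq <;>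
    simp [quarticVariation, (hvw _ h).1, (hvw _ h).2]

theorem summable_res_wt_quarticVariation (hv : (Function.support v).Finite)
    (hw : (Function.support w).Finite) :
    Summable fun q : Quad => if Res q then wt q.1 * quarticVariation v w q else 0 := by
  have hS := hv.union hw
  refine summable_of_hasFiniteSupport ((hS.prod (hS.prod (hS.prod hS))).subset ?_)
  refine subset_trans (fun q hq => ?_)
    (support_quarticVariation_subset v w Set.subset_union_left Set.subset_union_right)
  by_contra h
  simp_all

end Variation

theorem im_tsum_res_weighted_eq_zero {g : Quad → ℂ} (hg : ∀ q, g (conjSwap q) = conj (g q)) :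
    (∑' q : Quad, if Res q then (wt q.1 + wt q.2.2.1) * g q else 0).im = 0 := by
  refine Complex.im_tsum_eq_zero_of_conj_comp_perm conjSwap fun q => ?_
  by_cases h : Res q
  · simp only [res_conjSwap_iff, h, if_true, hg, map_mul, map_add, conj_wt, Complex.conj_conj]
    simp only [conjSwap_apply, wt_add_wt_of_res h]
  · simp [h, res_conjSwap_iff]

theorem im_tsum_res_wt_quarticVariation_eq_zero (v w : ℤ × ℤ → ℂ)
    (hv : (Function.support v).Finite) (hw : (Function.support w).Finite) :
    (∑' q : Quad, if Res q then wt q.1 * quarticVariation v w q else 0).im = 0 := by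
  have hsymm : ∀ q : Quad,
      ((if Res q then wt q.1 * quarticVariation v w q else 0) +
        if Res (pairSwap q) then wt (pairSwap q).1 * quarticVariation v w (pairSwap q) else 0) =
      if Res q then (wt q.1 + wt q.2.2.1) * quarticVariation v w q else 0 := by
    intro q
    by_cases h : Res q
    · simp only [res_pairSwap_iff, h, if_true, quarticVariation_pairSwap, add_mul]
      rfl
    · simp [h, res_pairSwap_iff]
  have hdouble := (summable_res_wt_quarticVariation v w hv hw).tsum_add_comp_perm pairSwap
  rw [tsum_congr hsymm] at hdouble
  have him := congrArg Complex.im hdouble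
  rw [im_tsum_res_weighted_eq_zero (quarticVariation_conjSwap v w), Complex.add_im] at him
  linarith

/-- Second observation: for finitely supported `v, w : ℤ² → ℂ`, the `⟨j⟩²`-weighted
resonant form with one `v`-entry in each of the four slots has vanishing imaginary part,
and moreover it equals the `(⟨j⟩² + ⟨j₂⟩²)`-weighted form with the `v`-entry in the first
two slots only. -/
theorem second_observation (v w : ℤ × ℤ → ℂ)
    (hv : (Function.support v).Finite) (hw : (Function.support w).Finite) :
    (∑' q : (ℤ × ℤ) × (ℤ × ℤ) × (ℤ × ℤ) × (ℤ × ℤ),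
      if Res q then
        wt q.1 *
          ((starRingEnd ℂ) (v q.1) * w q.2.1 * (starRingEnd ℂ) (w q.2.2.1) * w q.2.2.2 +
           (starRingEnd ℂ) (w q.1) * v q.2.1 * (starRingEnd ℂ) (w q.2.2.1) * w q.2.2.2 +
           (starRingEnd ℂ) (w q.1) * w q.2.1 * (starRingEnd ℂ) (v q.2.2.1) * w q.2.2.2 +
           (starRingEnd ℂ) (w q.1) * w q.2.1 * (starRingEnd ℂ) (w q.2.2.1) * v q.2.2.2)
      else 0).im = 0 ∧
    (∑' q : (ℤ × ℤ) × (ℤ × ℤ) × (ℤ × ℤ) × (ℤ × ℤ),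
      if Res q then
        wt q.1 *
          ((starRingEnd ℂ) (v q.1) * w q.2.1 * (starRingEnd ℂ) (w q.2.2.1) * w q.2.2.2 +
           (starRingEnd ℂ) (w q.1) * v q.2.1 * (starRingEnd ℂ) (w q.2.2.1) * w q.2.2.2 +
           (starRingEnd ℂ) (w q.1) * w q.2.1 * (starRingEnd ℂ) (v q.2.2.1) * w q.2.2.2 +
           (starRingEnd ℂ) (w q.1) * w q.2.1 * (starRingEnd ℂ) (w q.2.2.1) * v q.2.2.2)
      else 0).im =
    (∑' q : (ℤ × ℤ) × (ℤ × ℤ) × (ℤ × ℤ) × (ℤ × ℤ),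
      if Res q then
        (wt q.1 + wt q.2.2.1) *
          ((starRingEnd ℂ) (v q.1) * w q.2.1 * (starRingEnd ℂ) (w q.2.2.1) * w q.2.2.2 +
           (starRingEnd ℂ) (w q.1) * v q.2.1 * (starRingEnd ℂ) (w q.2.2.1) * w q.2.2.2)
      else 0).im := by
  have hleft := im_tsum_res_wt_quarticVariation_eq_zero v w hv hw
  have hright := im_tsum_res_weighted_eq_zero (quarticVariationFront_conjSwap v w)
  exact ⟨hleft, hleft.trans hright.symm⟩
end
end

section
/- For every β > 0 there exists a constant C = C(β) such that for every finitely supported sequence a : ℤ² → ℂ, the resonant nonlinearity satisfies ‖F(a)‖_{l²} ≤ C · ‖a‖_{l²}² · ‖a‖_{h^β}. -/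
noncomputable section

/-- The discrete Sobolev norm `‖a‖_{h^s} = (∑_j ⟨j⟩^{2s} |a_j|²)^{1/2}`,
where `⟨j⟩^{2s} = (1 + |j|²)^s`.  In particular `hnorm 0 = ‖·‖_{l²}`. -/
def hnorm (s : ℝ) (a : ℤ × ℤ → ℂ) : ℝ :=
  (∑' j : ℤ × ℤ, ((1 : ℝ) + (nsq j : ℝ)) ^ s * ‖a j‖ ^ 2) ^ ((1 : ℝ) / 2)

/-- The cubic resonant nonlinearity
`F(a)_j = ∑_{(j1,j2,j3) ∈ R(j)} a_{j1} conj(a_{j2}) a_{j3}` with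
`R(j) = {(j1,j2,j3) : j1 - j2 + j3 = j, |j1|² - |j2|² + |j3|² = |j|²}`. -/
def Fnl (a : ℤ × ℤ → ℂ) (j : ℤ × ℤ) : ℂ :=
  ∑' p : (ℤ × ℤ) × (ℤ × ℤ) × (ℤ × ℤ),
    if p.1 - p.2.1 + p.2.2 = j ∧ nsq p.1 - nsq p.2.1 + nsq p.2.2 = nsq j then
      a p.1 * (starRingEnd ℂ) (a p.2.1) * a p.2.2
    else 0

/-!
Fix `j`. By Cauchy–Schwarz over the resonant triples `(j₁, j₂, j₃)` with `j₁ - j₂ + j₃ = j`,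
weighted by `u = ⟨j₁ - j₃⟩^{2δ}`,
`|F(a)_j|² ≤ (∑ u |a_{j₁}|² |a_{j₃}|²) (∑ u⁻¹ |a_{j₂}|²)`.
Resonance means `(j₁ - j₂) ⊥ (j₃ - j₂)`, hence `|j₁ - j₃| = |j - j₂|`. So for fixed `j, j₂` the
point `j₁ - j₃` lies on the circle of radius `|j - j₂|`, and for fixed `j₁, j₃` the point `j - j₂`
lies on the circle of radius `|j₁ - j₃|`. A circle of radius `r` carries `≤ C ⟨r⟩^{2δ}` lattice
points, since each is a Gaussian integer dividing `r²` and `ℤ[i]` satisfies the divisor bound.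
Hence the second factor is `≲ ‖a‖²_{l²}`, and the first, summed over `j`, is
`≲ ‖a‖⁴_{h^{2δ}} ≤ ‖a‖²_{l²} ‖a‖²_{h^{4δ}}` because `⟨j₁ - j₃⟩² ≤ 2 ⟨j₁⟩² ⟨j₃⟩²`.
Take `δ = β / 4`.
-/

open Finset UniqueFactorizationMonoid

theorem Finset.card_le_prod_count_add_one_of_forall_le {α : Type*} [DecidableEq α] {M : Multiset α}
    (s : Finset (Multiset α)) (hs : ∀ b ∈ s, b ≤ M) :
    #s ≤ ∏ a ∈ M.toFinset, (M.count a + 1) := by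
  have h := card_le_card_of_injOn (t := M.toFinset.pi fun a => range (M.count a + 1))
    (fun b a _ => b.count a) (fun b hb => by
      simpa [Nat.lt_succ_iff] using fun a _ => Multiset.count_le_of_le a (hs b hb))
    (fun b₁ h₁ b₂ h₂ he => Multiset.ext.mpr fun a => by
      by_cases ha : a ∈ M.toFinset
      · exact congrFun (congrFun he a) ha
      · have hM : M.count a = 0 := Multiset.count_eq_zero.mpr (by simpa using ha)
        have e₁ := Multiset.count_le_of_le a (hs b₁ h₁)
        have e₂ := Multiset.count_le_of_le a (hs b₂ h₂)
        omega)
  simpa using h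

theorem UniqueFactorizationMonoid.card_le_of_forall_dvd {α : Type*}
    [CommMonoidWithZero α] [NormalizationMonoid α] [UniqueFactorizationMonoid α]
    [Finite αˣ] [DecidableEq α] {y : α} (hy : y ≠ 0) {s : Finset α} (hs : ∀ x ∈ s, x ∣ y) :
    #s ≤ Nat.card αˣ * ∏ p ∈ (normalizedFactors y).toFinset,
      ((normalizedFactors y).count p + 1) := by
  have := Fintype.ofFinite αˣ
  set P := (normalizedFactors y).powerset.toFinset
  have hsub : s ⊆ (P ×ˢ (univ : Finset αˣ)).image fun m => m.1.prod * m.2 := by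
    intro x hx
    have hx0 : x ≠ 0 := fun h => hy (zero_dvd_iff.mp (h ▸ hs x hx))
    obtain ⟨u, hu⟩ := prod_normalizedFactors hx0
    refine mem_image.mpr ⟨(normalizedFactors x, u), ?_, hu⟩
    simpa [P] using (dvd_iff_normalizedFactors_le_normalizedFactors hx0 hy).mp (hs x hx)
  have hP : #P ≤ ∏ p ∈ (normalizedFactors y).toFinset, ((normalizedFactors y).count p + 1) :=
    card_le_prod_count_add_one_of_forall_le P fun b hb => by simpa [P] using hb
  calc #s ≤ #(P ×ˢ (univ : Finset αˣ)) := (card_le_card hsub).trans card_image_le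
    _ ≤ _ := by
      rw [card_product, card_univ, Nat.card_eq_fintype_card, mul_comm]
      exact Nat.mul_le_mul_left _ hP

theorem nat_add_one_le_mul_rpow {δ N : ℝ} (hδ : 0 < δ) (hN : 2 ≤ N) (c : ℕ) :
    (c + 1 : ℝ) ≤ (1 + (δ * Real.log 2)⁻¹) * (N ^ c) ^ δ := by
  have hL : 0 < δ * Real.log 2 := mul_pos hδ (Real.log_pos one_lt_two)
  have hexp : 1 + c * (δ * Real.log 2) ≤ (N ^ c) ^ δ := calc
    1 + c * (δ * Real.log 2) ≤ Real.exp (c * (δ * Real.log 2)) := by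
      linarith [Real.add_one_le_exp (c * (δ * Real.log 2))]
    _ = ((2 : ℝ) ^ c) ^ δ := by
      rw [← Real.rpow_natCast, ← Real.rpow_mul zero_le_two, Real.rpow_def_of_pos two_pos]
      ring_nf
    _ ≤ (N ^ c) ^ δ := by gcongr
  calc (c + 1 : ℝ) ≤ (1 + (δ * Real.log 2)⁻¹) * (1 + c * (δ * Real.log 2)) := by
        have hc : (δ * Real.log 2)⁻¹ * (c * (δ * Real.log 2)) = c := by field_simp
        have : 0 ≤ (δ * Real.log 2)⁻¹ := by positivity
        have : 0 ≤ c * (δ * Real.log 2) := by positivity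
        nlinarith
    _ ≤ _ := by gcongr

theorem nat_add_one_le_rpow {δ N : ℝ} (hδ : 0 < δ) (hN : 2 ^ δ⁻¹ ≤ N) (c : ℕ) :
    (c + 1 : ℝ) ≤ (N ^ c) ^ δ := by
  have h2 : 2 ≤ N ^ δ := by
    calc (2 : ℝ) = (2 ^ δ⁻¹) ^ δ := by
          rw [← Real.rpow_mul zero_le_two, inv_mul_cancel₀ hδ.ne', Real.rpow_one]
      _ ≤ N ^ δ := by gcongr
  have hN0 : 0 ≤ N := le_trans (by positivity) hN
  calc (c + 1 : ℝ) ≤ 2 ^ c := by exact_mod_cast Nat.lt_two_pow_self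
    _ ≤ (N ^ δ) ^ c := by gcongr
    _ = (N ^ c) ^ δ := Real.rpow_pow_comm hN0 δ c

theorem prod_add_one_le_mul_prod_rpow {ι : Type*} {δ : ℝ} (hδ : 0 < δ) (F : Finset ι)
    (e : ι → ℕ) (N : ι → ℝ) (hN : ∀ i ∈ F, 2 ≤ N i) :
    ∏ i ∈ F, ((e i : ℝ) + 1) ≤
      (1 + (δ * Real.log 2)⁻¹) ^ #{i ∈ F | N i < 2 ^ δ⁻¹} * ∏ i ∈ F, (N i ^ e i) ^ δ := by
  classical
  calc ∏ i ∈ F, ((e i : ℝ) + 1)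
      ≤ ∏ i ∈ F, (if N i < 2 ^ δ⁻¹ then 1 + (δ * Real.log 2)⁻¹ else 1) * (N i ^ e i) ^ δ := by
        refine prod_le_prod (fun i _ => by positivity) fun i hi => ?_
        split_ifs with h
        · exact nat_add_one_le_mul_rpow hδ (hN i hi) _
        · rw [one_mul]
          exact nat_add_one_le_rpow hδ (not_lt.mp h) _
    _ = _ := by rw [prod_mul_distrib, prod_ite, prod_const, prod_const_one, mul_one]

namespace GaussianInt

def ofPair (y : ℤ × ℤ) : GaussianInt := ⟨y.1, y.2⟩

theorem norm_ofPair (y : ℤ × ℤ) : (ofPair y).norm = nsq y := by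
  simp [ofPair, Zsqrtd.norm_def, nsq]
  ring

theorem ofPair_injective : Function.Injective ofPair := fun _ _ h =>
  Prod.ext (congrArg Zsqrtd.re h) (congrArg Zsqrtd.im h)

theorem ofPair_dvd (y : ℤ × ℤ) : ofPair y ∣ (nsq y : GaussianInt) :=
  ⟨star (ofPair y), by rw [← norm_ofPair, Zsqrtd.norm_eq_mul_conj]⟩

theorem finite_setOf_norm_le (n : ℤ) : {z : GaussianInt | z.norm ≤ n}.Finite := by
  refine ((Set.finite_Icc (-n) n).prod (Set.finite_Icc (-n) n)).preimage
    (f := fun z : GaussianInt => (z.re, z.im))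
    (fun z _ z' _ h => Zsqrtd.ext (congrArg Prod.fst h) (congrArg Prod.snd h)) |>.subset ?_
  intro z hz
  have hz : z.re * z.re + z.im * z.im ≤ n := by simpa [Zsqrtd.norm_def] using hz
  simp only [Set.mem_preimage, Set.mem_prod, Set.mem_Icc]
  refine ⟨⟨?_, ?_⟩, ?_, ?_⟩ <;> nlinarith [sq_nonneg (z.re + 1), sq_nonneg (z.re - 1),
    sq_nonneg (z.im + 1), sq_nonneg (z.im - 1), mul_self_nonneg z.re, mul_self_nonneg z.im]

instance : Finite GaussianIntˣ :=
  have := (finite_setOf_norm_le 1).to_subtype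
  Finite.of_injective (fun u : GaussianIntˣ => (⟨u, show (u : GaussianInt).norm ≤ 1 from
      ((Zsqrtd.norm_eq_one_iff' (by norm_num : (-1 : ℤ) ≤ 0) _).mpr u.isUnit).le⟩ :
        {z : GaussianInt | z.norm ≤ 1}))
    fun _ _ h => Units.ext (congrArg Subtype.val h)

theorem two_le_norm_of_irreducible {π : GaussianInt} (hπ : Irreducible π) : 2 ≤ π.norm := by
  have h0 : 0 < π.norm := norm_pos.mpr hπ.ne_zero
  have h1 : π.norm ≠ 1 := fun h => hπ.not_isUnit ((Zsqrtd.norm_eq_one_iff' (by norm_num) π).mp h)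
  omega

theorem prod_norm_pow_count [NormalizationMonoid GaussianInt] [DecidableEq GaussianInt]
    {z : GaussianInt} (hz : z ≠ 0) :
    ∏ π ∈ (normalizedFactors z).toFinset, π.norm ^ (normalizedFactors z).count π = z.norm := by
  rw [← prod_multiset_map_count]
  exact (map_multiset_prod (Zsqrtd.normMonoidHom (d := -1)) _).symm.trans
    (Zsqrtd.norm_eq_of_associated (by norm_num) (prod_normalizedFactors hz))

theorem exists_card_le_of_forall_dvd {δ : ℝ} (hδ : 0 < δ) :
    ∃ C, ∀ z : GaussianInt, z ≠ 0 → ∀ s : Finset GaussianInt, (∀ x ∈ s, x ∣ z) →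
      (#s : ℝ) ≤ C * (z.norm : ℝ) ^ δ := by
  classical
  let _ : NormalizationMonoid GaussianInt :=
    UniqueFactorizationMonoid.strongNormalizationMonoid.toNormalizationMonoid
  set M := 1 + (δ * Real.log 2)⁻¹
  set small := (finite_setOf_norm_le ⌈(2 : ℝ) ^ δ⁻¹⌉).toFinset
  refine ⟨Nat.card GaussianIntˣ * M ^ #small, fun z hz s hs => ?_⟩
  set F := (normalizedFactors z).toFinset
  have hirr : ∀ π ∈ F, Irreducible π := fun π hπ =>
    irreducible_of_normalized_factor π (Multiset.mem_toFinset.mp hπ)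
  have hsmall : #{π ∈ F | (π.norm : ℝ) < 2 ^ δ⁻¹} ≤ #small := by
    refine card_le_card fun π hπ => ?_
    rw [mem_filter] at hπ
    simpa [small] using Int.cast_le.mp (hπ.2.le.trans (Int.le_ceil _))
  have hprod := prod_add_one_le_mul_prod_rpow hδ F (normalizedFactors z).count
    (fun π => (π.norm : ℝ)) fun π hπ => by exact_mod_cast two_le_norm_of_irreducible (hirr π hπ)
  have hN : ∏ π ∈ F, (π.norm : ℝ) ^ (normalizedFactors z).count π = z.norm := by
    exact_mod_cast prod_norm_pow_count hz
  rw [Real.finsetProd_rpow _ _ fun π hπ => pow_nonneg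
    (by exact_mod_cast (two_le_norm_of_irreducible (hirr π hπ)).trans' zero_le_two) _, hN] at hprod
  calc (#s : ℝ) ≤ Nat.card GaussianIntˣ * ∏ π ∈ F, ((normalizedFactors z).count π + 1 : ℝ) := by
        exact_mod_cast card_le_of_forall_dvd hz hs
    _ ≤ Nat.card GaussianIntˣ * (M ^ #small * (z.norm : ℝ) ^ δ) := by
        gcongr
        refine hprod.trans ?_
        gcongr
        · exact Real.rpow_nonneg (by exact_mod_cast norm_nonneg z) _
        · exact le_add_of_nonneg_right (by have := Real.log_pos one_lt_two; positivity)
    _ = _ := by ring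

end GaussianInt

theorem nsq_nonneg (y : ℤ × ℤ) : 0 ≤ nsq y := by unfold nsq; positivity

theorem eq_zero_of_nsq_eq_zero {y : ℤ × ℤ} (h : nsq y = 0) : y = 0 := by
  have h' : y.1 ^ 2 + y.2 ^ 2 = 0 := h
  ext <;> simp only [Prod.fst_zero, Prod.snd_zero] <;> nlinarith [sq_nonneg y.1, sq_nonneg y.2]

/-- `⟨j⟩²`, so that `hnorm s a = (∑' j, bracketSq j ^ s * ‖a j‖ ^ 2) ^ (1 / 2)` by definition. -/
def bracketSq (j : ℤ × ℤ) : ℝ := 1 + nsq j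

theorem one_le_bracketSq (j : ℤ × ℤ) : 1 ≤ bracketSq j := by
  have : (0 : ℝ) ≤ nsq j := by exact_mod_cast nsq_nonneg j
  unfold bracketSq
  linarith

theorem bracketSq_pos (j : ℤ × ℤ) : 0 < bracketSq j := one_pos.trans_le (one_le_bracketSq j)

theorem bracketSq_rpow_pos (j : ℤ × ℤ) (s : ℝ) : 0 < bracketSq j ^ s :=
  Real.rpow_pos_of_pos (bracketSq_pos j) s

theorem bracketSq_sub_le (x z : ℤ × ℤ) : bracketSq (x - z) ≤ 2 * bracketSq x * bracketSq z := by
  have hx : (0 : ℝ) ≤ nsq x := by exact_mod_cast nsq_nonneg x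
  have hz : (0 : ℝ) ≤ nsq z := by exact_mod_cast nsq_nonneg z
  have hxz : (0 : ℝ) ≤ nsq (x + z) := by exact_mod_cast nsq_nonneg (x + z)
  have parallelogram : (nsq (x - z) : ℝ) + nsq (x + z) = 2 * nsq x + 2 * nsq z := by
    simp only [nsq, Prod.fst_sub, Prod.snd_sub, Prod.fst_add, Prod.snd_add]
    push_cast
    ring
  simp only [bracketSq]
  nlinarith [mul_nonneg hx hz]

/-- The divisor bound `r₂(n) ≤ C (1 + n)^δ` for sums of two squares, phrased for finite sets of
lattice points on the circle through `w`. -/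
def CircleCountBound (C δ : ℝ) : Prop :=
  ∀ (w : ℤ × ℤ) (s : Finset (ℤ × ℤ)), (∀ y ∈ s, nsq y = nsq w) → (#s : ℝ) ≤ C * bracketSq w ^ δ

theorem exists_circleCountBound {δ : ℝ} (hδ : 0 < δ) : ∃ C, CircleCountBound C δ := by
  classical
  obtain ⟨C, hC⟩ := GaussianInt.exists_card_le_of_forall_dvd (half_pos hδ)
  refine ⟨max C 1, fun w s hs => ?_⟩
  have hb : 1 ≤ bracketSq w ^ δ := Real.one_le_rpow (one_le_bracketSq w) hδ.le
  rcases (nsq_nonneg w).eq_or_lt with hw0 | hw0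
  · have hs0 : s ⊆ {0} := fun y hy =>
      mem_singleton.mpr (eq_zero_of_nsq_eq_zero ((hs y hy).trans hw0.symm))
    calc (#s : ℝ) ≤ 1 := by exact_mod_cast (card_le_card hs0).trans (card_singleton _).le
      _ ≤ max C 1 * bracketSq w ^ δ := one_le_mul_of_one_le_of_one_le (le_max_right _ _) hb
  · have hk : ((nsq w : ℤ) : GaussianInt) ≠ 0 := Int.cast_ne_zero.mpr hw0.ne'
    have hdvd : ∀ x ∈ s.image GaussianInt.ofPair, x ∣ ((nsq w : ℤ) : GaussianInt) := by
      simp only [mem_image, forall_exists_index, and_imp, forall_apply_eq_imp_iff₂]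
      exact fun y hy => hs y hy ▸ GaussianInt.ofPair_dvd y
    have hcard := hC _ hk _ hdvd
    rw [card_image_of_injective _ GaussianInt.ofPair_injective, Zsqrtd.norm_intCast,
      Int.cast_mul, ← sq, ← Real.rpow_natCast, ← Real.rpow_mul (by positivity), Nat.cast_ofNat,
      mul_div_cancel₀ δ two_ne_zero] at hcard
    have hw : (nsq w : ℝ) ≤ bracketSq w := by simp [bracketSq]
    calc (#s : ℝ) ≤ C * (nsq w : ℝ) ^ δ := hcard
      _ ≤ max C 1 * bracketSq w ^ δ := by gcongr; exact le_max_left _ _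

theorem CircleCountBound.card_le_of_injOn {C δ : ℝ} (hC : CircleCountBound C δ) {α : Type*}
    {s : Finset α} {f : α → ℤ × ℤ} (hf : Set.InjOn f s) {w : ℤ × ℤ}
    (hs : ∀ p ∈ s, nsq (f p) = nsq w) : (#s : ℝ) ≤ C * bracketSq w ^ δ := by
  classical
  rw [← card_image_of_injOn hf]
  exact hC w _ (by simpa using hs)

theorem CircleCountBound.one_le {C δ : ℝ} (hC : CircleCountBound C δ) : 1 ≤ C := by
  simpa [bracketSq, nsq] using hC 0 {0} (by simp)

def IsResonant (p : (ℤ × ℤ) × (ℤ × ℤ) × (ℤ × ℤ)) : Prop :=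
  nsq p.1 - nsq p.2.1 + nsq p.2.2 = nsq (p.1 - p.2.1 + p.2.2)

instance : DecidablePred IsResonant := fun _ => inferInstanceAs (Decidable (_ = _))

/-- Resonance says `(j₁ - j₂) ⊥ (j₃ - j₂)`; the diagonals `j - j₂` and `j₁ - j₃` of the rectangle
they span have equal length. -/
theorem IsResonant.nsq_sub_eq {p : (ℤ × ℤ) × (ℤ × ℤ) × (ℤ × ℤ)} (h : IsResonant p) :
    nsq (p.1 - p.2.1 + p.2.2 - p.2.1) = nsq (p.1 - p.2.2) := by
  obtain ⟨⟨x₁, x₂⟩, ⟨v₁, v₂⟩, ⟨z₁, z₂⟩⟩ := p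
  simp only [IsResonant, nsq, Prod.mk_add_mk, Prod.mk_sub_mk] at h ⊢
  linear_combination -2 * h

def resonantTriples (A : Finset (ℤ × ℤ)) : Finset ((ℤ × ℤ) × (ℤ × ℤ) × (ℤ × ℤ)) :=
  {p ∈ A ×ˢ A ×ˢ A | IsResonant p}

def resonantSlice (A : Finset (ℤ × ℤ)) (j : ℤ × ℤ) : Finset ((ℤ × ℤ) × (ℤ × ℤ) × (ℤ × ℤ)) :=
  {p ∈ resonantTriples A | p.1 - p.2.1 + p.2.2 = j}

section FiniteSupport

variable {a : ℤ × ℤ → ℂ} {A : Finset (ℤ × ℤ)}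

theorem Fnl_eq_sum (ha : ∀ j ∉ A, a j = 0) (j : ℤ × ℤ) :
    Fnl a j = ∑ p ∈ resonantSlice A j, a p.1 * (starRingEnd ℂ) (a p.2.1) * a p.2.2 := by
  rw [Fnl, tsum_eq_sum]
  · refine sum_congr rfl fun p hp => if_pos ?_
    simp only [resonantSlice, resonantTriples, mem_filter] at hp
    exact ⟨hp.2, hp.2 ▸ hp.1.2⟩
  · intro p hp
    split_ifs with h
    · by_contra hne
      simp only [mul_ne_zero_iff, map_ne_zero] at hne
      have hres : IsResonant p := by rw [IsResonant, h.1]; exact h.2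
      refine hp (mem_filter.mpr ⟨mem_filter.mpr ⟨?_, hres⟩, h.1⟩)
      simp only [mem_product]
      exact ⟨not_imp_comm.mp (ha _) hne.1.1, not_imp_comm.mp (ha _) hne.1.2,
        not_imp_comm.mp (ha _) hne.2⟩
    · rfl

theorem Fnl_eq_zero_of_notMem (ha : ∀ j ∉ A, a j = 0) {j : ℤ × ℤ}
    (hj : j ∉ (resonantTriples A).image fun p => p.1 - p.2.1 + p.2.2) : Fnl a j = 0 := by
  rw [Fnl_eq_sum ha]
  refine sum_eq_zero fun p hp => absurd ?_ hj
  rw [resonantSlice, mem_filter] at hp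
  exact hp.2 ▸ mem_image_of_mem _ hp.1

theorem hnorm_eq_sum (ha : ∀ j ∉ A, a j = 0) (s : ℝ) :
    hnorm s a = (∑ j ∈ A, bracketSq j ^ s * ‖a j‖ ^ 2) ^ ((1 : ℝ) / 2) := by
  rw [hnorm, tsum_eq_sum fun j hj => by simp [ha j hj]]
  rfl

end FiniteSupport

section Counting

variable {C δ : ℝ} (hC : CircleCountBound C δ) (A : Finset (ℤ × ℤ))
include hC

theorem card_resonant_fiber_outer_le (x z : ℤ × ℤ) :
    (#{p ∈ resonantTriples A | (p.1, p.2.2) = (x, z)} : ℝ) ≤ C * bracketSq (x - z) ^ δ := by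
  refine hC.card_le_of_injOn (f := fun p => p.1 - p.2.1 + p.2.2 - p.2.1) ?_ fun p hp => ?_
  · intro p hp p' hp' h
    simp only [coe_filter, resonantTriples, mem_filter, Set.mem_ofPred_eq, Prod.ext_iff,
      Prod.fst_add, Prod.fst_sub, Prod.snd_add, Prod.snd_sub] at hp hp' h
    ext <;> omega
  · simp only [resonantTriples, mem_filter, Prod.mk.injEq] at hp
    rw [hp.1.2.nsq_sub_eq, hp.2.1, hp.2.2]

theorem card_resonant_fiber_middle_le (v j : ℤ × ℤ) :
    (#{p ∈ resonantSlice A j | p.2.1 = v} : ℝ) ≤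
      C * bracketSq (j - v) ^ δ := by
  refine hC.card_le_of_injOn (f := fun p => p.1 - p.2.2) ?_ fun p hp => ?_
  · intro p hp p' hp' h
    simp only [coe_filter, resonantSlice, resonantTriples, mem_filter, Set.mem_ofPred_eq,
      Prod.ext_iff, Prod.fst_add, Prod.fst_sub, Prod.snd_add, Prod.snd_sub] at hp hp' h
    ext <;> omega
  · simp only [resonantSlice, resonantTriples, mem_filter] at hp
    rw [← hp.1.1.2.nsq_sub_eq, hp.1.2, hp.2]

end Counting

theorem sq_sum_rpow_half_mul_le {ι : Type*} (s : Finset ι) {b c : ι → ℝ}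
    (hb : ∀ i ∈ s, 0 ≤ b i) (hc : ∀ i ∈ s, 0 ≤ c i) (t : ℝ) :
    (∑ i ∈ s, b i ^ (t / 2) * c i) ^ 2 ≤ (∑ i ∈ s, c i) * ∑ i ∈ s, b i ^ t * c i := by
  refine sum_sq_le_sum_mul_sum_of_sq_le_mul s hc (fun i hi => mul_nonneg
    (Real.rpow_nonneg (hb i hi) _) (hc i hi)) fun i hi => le_of_eq ?_
  rw [mul_pow, ← Real.rpow_mul_natCast (hb i hi)]
  ring_nf

section Estimates

variable {a : ℤ × ℤ → ℂ} {A : Finset (ℤ × ℤ)}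

theorem norm_Fnl_sq_le (ha : ∀ j ∉ A, a j = 0) (δ : ℝ) (j : ℤ × ℤ) :
    ‖Fnl a j‖ ^ 2 ≤
      (∑ p ∈ resonantSlice A j, bracketSq (p.1 - p.2.2) ^ δ * (‖a p.1‖ ^ 2 * ‖a p.2.2‖ ^ 2)) *
        ∑ p ∈ resonantSlice A j, (bracketSq (p.1 - p.2.2) ^ δ)⁻¹ * ‖a p.2.1‖ ^ 2 := by
  have hF : ‖Fnl a j‖ ≤ ∑ p ∈ resonantSlice A j, ‖a p.1‖ * ‖a p.2.1‖ * ‖a p.2.2‖ := by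
    rw [Fnl_eq_sum ha]
    refine (norm_sum_le _ _).trans_eq (sum_congr rfl fun p _ => ?_)
    rw [norm_mul, norm_mul, Complex.norm_conj]
  refine (pow_le_pow_left₀ (norm_nonneg _) hF 2).trans
    (sum_sq_le_sum_mul_sum_of_sq_le_mul _
      (fun p _ => mul_nonneg (bracketSq_rpow_pos _ _).le (by positivity))
      (fun p _ => mul_nonneg (inv_nonneg.mpr (bracketSq_rpow_pos _ _).le) (by positivity))
      fun p _ => le_of_eq ?_)
  have hu := (bracketSq_rpow_pos (p.1 - p.2.2) δ).ne'
  field_simp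

variable {C δ : ℝ} (hC : CircleCountBound C δ)
include hC

theorem sum_resonantSlice_inv_weight_le (j : ℤ × ℤ) :
    ∑ p ∈ resonantSlice A j, (bracketSq (p.1 - p.2.2) ^ δ)⁻¹ * ‖a p.2.1‖ ^ 2 ≤
      C * ∑ v ∈ A, ‖a v‖ ^ 2 := by
  rw [← sum_fiberwise_of_maps_to (t := A) (g := fun p => p.2.1) fun p hp => by
    simp only [resonantSlice, resonantTriples, mem_filter, mem_product] at hp
    exact hp.1.1.2.1, mul_sum]
  refine sum_le_sum fun v _ => ?_
  have hconst : ∀ p ∈ {p ∈ resonantSlice A j | p.2.1 = v},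
      (bracketSq (p.1 - p.2.2) ^ δ)⁻¹ * ‖a p.2.1‖ ^ 2 =
        (bracketSq (j - v) ^ δ)⁻¹ * ‖a v‖ ^ 2 := fun p hp => by
    simp only [resonantSlice, resonantTriples, mem_filter] at hp
    rw [← hp.1.2, ← hp.2, bracketSq, bracketSq, hp.1.1.2.nsq_sub_eq]
  rw [sum_congr rfl hconst, sum_const, nsmul_eq_mul]
  have hu := (bracketSq_rpow_pos (j - v) δ).ne'
  calc _ ≤ C * bracketSq (j - v) ^ δ * ((bracketSq (j - v) ^ δ)⁻¹ * ‖a v‖ ^ 2) :=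
        mul_le_mul_of_nonneg_right (card_resonant_fiber_middle_le hC A v j)
          (mul_nonneg (inv_nonneg.mpr (bracketSq_rpow_pos _ _).le) (by positivity))
    _ = C * ‖a v‖ ^ 2 := by field_simp

theorem sum_resonant_fiber_outer_le (hδ : 0 ≤ δ) (x z : ℤ × ℤ) :
    ∑ p ∈ resonantTriples A with (p.1, p.2.2) = (x, z),
        bracketSq (p.1 - p.2.2) ^ δ * (‖a p.1‖ ^ 2 * ‖a p.2.2‖ ^ 2) ≤
      C * 2 ^ (2 * δ) *
        ((bracketSq x ^ (2 * δ) * ‖a x‖ ^ 2) * (bracketSq z ^ (2 * δ) * ‖a z‖ ^ 2)) := by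
  have hconst : ∀ p ∈ {p ∈ resonantTriples A | (p.1, p.2.2) = (x, z)},
      bracketSq (p.1 - p.2.2) ^ δ * (‖a p.1‖ ^ 2 * ‖a p.2.2‖ ^ 2) =
        bracketSq (x - z) ^ δ * (‖a x‖ ^ 2 * ‖a z‖ ^ 2) := fun p hp => by
    simp only [mem_filter, Prod.mk.injEq] at hp
    rw [hp.2.1, hp.2.2]
  rw [sum_congr rfl hconst, sum_const, nsmul_eq_mul]
  have hC0 : 0 ≤ C := zero_le_one.trans hC.one_le
  calc _ ≤ C * bracketSq (x - z) ^ δ * (bracketSq (x - z) ^ δ * (‖a x‖ ^ 2 * ‖a z‖ ^ 2)) :=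
        mul_le_mul_of_nonneg_right (card_resonant_fiber_outer_le hC A x z)
          (mul_nonneg (bracketSq_rpow_pos _ _).le (by positivity))
    _ = C * bracketSq (x - z) ^ (2 * δ) * (‖a x‖ ^ 2 * ‖a z‖ ^ 2) := by
        rw [two_mul, Real.rpow_add (bracketSq_pos _)]
        ring
    _ ≤ C * (2 * bracketSq x * bracketSq z) ^ (2 * δ) * (‖a x‖ ^ 2 * ‖a z‖ ^ 2) := by
        gcongr
        · exact (bracketSq_pos _).le
        · exact bracketSq_sub_le x z
    _ = _ := by
        rw [Real.mul_rpow (by linarith [bracketSq_pos x]) (bracketSq_pos z).le,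
          Real.mul_rpow zero_le_two (bracketSq_pos x).le]
        ring

theorem sum_resonantTriples_weight_le (hδ : 0 ≤ δ) :
    ∑ p ∈ resonantTriples A, bracketSq (p.1 - p.2.2) ^ δ * (‖a p.1‖ ^ 2 * ‖a p.2.2‖ ^ 2) ≤
      C * 2 ^ (2 * δ) * (∑ x ∈ A, bracketSq x ^ (2 * δ) * ‖a x‖ ^ 2) ^ 2 := by
  rw [← sum_fiberwise_of_maps_to (t := A ×ˢ A) (g := fun p => (p.1, p.2.2)) fun p hp => by
    simp only [resonantTriples, mem_filter, mem_product] at hp ⊢; exact ⟨hp.1.1, hp.1.2.2⟩]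
  calc _ ≤ ∑ q ∈ A ×ˢ A, C * 2 ^ (2 * δ) *
        ((bracketSq q.1 ^ (2 * δ) * ‖a q.1‖ ^ 2) * (bracketSq q.2 ^ (2 * δ) * ‖a q.2‖ ^ 2)) :=
        sum_le_sum fun q _ => sum_resonant_fiber_outer_le hC hδ q.1 q.2
    _ = _ := by rw [← mul_sum, sum_product, sq, sum_mul_sum]

end Estimates

theorem sum_norm_Fnl_sq_le {a : ℤ × ℤ → ℂ} {A : Finset (ℤ × ℤ)} {β C : ℝ} (hβ : 0 ≤ β)
    (hC : CircleCountBound C (β / 4)) (ha : ∀ j ∉ A, a j = 0) :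
    ∑ j ∈ (resonantTriples A).image (fun p => p.1 - p.2.1 + p.2.2), ‖Fnl a j‖ ^ 2 ≤
      C ^ 2 * 2 ^ (β / 2) * (∑ x ∈ A, ‖a x‖ ^ 2) ^ 2 * ∑ x ∈ A, bracketSq x ^ β * ‖a x‖ ^ 2 := by
  have hC0 : 0 ≤ C := zero_le_one.trans hC.one_le
  have hX₀ : 0 ≤ ∑ x ∈ A, ‖a x‖ ^ 2 := sum_nonneg fun _ _ => by positivity
  have hweight : ∀ p : (ℤ × ℤ) × (ℤ × ℤ) × (ℤ × ℤ),
      0 ≤ bracketSq (p.1 - p.2.2) ^ (β / 4) * (‖a p.1‖ ^ 2 * ‖a p.2.2‖ ^ 2) := fun p =>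
    mul_nonneg (bracketSq_rpow_pos _ _).le (by positivity)
  calc _ ≤ ∑ j ∈ (resonantTriples A).image (fun p => p.1 - p.2.1 + p.2.2),
        (∑ p ∈ resonantSlice A j,
          bracketSq (p.1 - p.2.2) ^ (β / 4) * (‖a p.1‖ ^ 2 * ‖a p.2.2‖ ^ 2)) *
        (C * ∑ x ∈ A, ‖a x‖ ^ 2) := sum_le_sum fun j _ => (norm_Fnl_sq_le ha _ j).trans
          (mul_le_mul_of_nonneg_left (sum_resonantSlice_inv_weight_le hC j)
            (sum_nonneg fun p _ => hweight p))
    _ = (∑ p ∈ resonantTriples A,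
          bracketSq (p.1 - p.2.2) ^ (β / 4) * (‖a p.1‖ ^ 2 * ‖a p.2.2‖ ^ 2)) *
        (C * ∑ x ∈ A, ‖a x‖ ^ 2) := by
      simp only [resonantSlice]
      rw [← sum_mul, sum_fiberwise_of_maps_to fun p hp => mem_image_of_mem _ hp]
    _ ≤ C * 2 ^ (β / 2) * (∑ x ∈ A, bracketSq x ^ (β / 2) * ‖a x‖ ^ 2) ^ 2 *
        (C * ∑ x ∈ A, ‖a x‖ ^ 2) := by
      rw [show β / 2 = 2 * (β / 4) by ring]
      exact mul_le_mul_of_nonneg_right (sum_resonantTriples_weight_le hC (by positivity))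
        (by positivity)
    _ ≤ C * 2 ^ (β / 2) * ((∑ x ∈ A, ‖a x‖ ^ 2) * ∑ x ∈ A, bracketSq x ^ β * ‖a x‖ ^ 2) *
        (C * ∑ x ∈ A, ‖a x‖ ^ 2) := by
      gcongr
      exact sq_sum_rpow_half_mul_le A (fun x _ => (bracketSq_pos x).le)
        (fun _ _ => by positivity) β
    _ = _ := by ring

/-- `‖F(a)‖_{l²} ≤ C ‖a‖_{l²}² ‖a‖_{h^β}` for every `β > 0`. -/
theorem l2_estimate_resonant_nonlinearity :
    ∀ β : ℝ, 0 < β → ∃ C : ℝ, ∀ a : ℤ × ℤ → ℂ, (Function.support a).Finite →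
      hnorm 0 (Fnl a) ≤ C * hnorm 0 a ^ 2 * hnorm β a := by
  intro β hβ
  obtain ⟨C, hC⟩ := exists_circleCountBound (div_pos hβ four_pos)
  refine ⟨√(C ^ 2 * 2 ^ (β / 2)), fun a ha => ?_⟩
  have hA : ∀ j ∉ ha.toFinset, a j = 0 := fun j hj => by simpa using hj
  have hX₀ : 0 ≤ ∑ x ∈ ha.toFinset, ‖a x‖ ^ 2 := sum_nonneg fun _ _ => by positivity
  rw [hnorm_eq_sum fun _ => Fnl_eq_zero_of_notMem hA, hnorm_eq_sum hA, hnorm_eq_sum hA]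
  simp only [Real.rpow_zero, one_mul, ← Real.sqrt_eq_rpow]
  rw [Real.sq_sqrt hX₀, ← Real.sqrt_sq hX₀, ← Real.sqrt_mul (by positivity),
    ← Real.sqrt_mul (by positivity)]
  exact Real.sqrt_le_sqrt (sum_norm_Fnl_sq_le hβ.le hC hA)
end
end

section
/- For every β with 3/4 < β < 1 there exists a constant C = C(β) such that for every finitely supported sequence a : ℤ² → ℂ, the resonant nonlinearity satisfies ‖F(a)‖_{l²} ≤ C · ‖a‖_{l²}^{3−2β} · ‖a‖_{h¹}^{2β}; that is, the estimate ‖F(a)‖_{l²} ≲ ‖a‖_{l²}^{δ₁} ‖a‖_{h¹}^{3−δ₁} holds with δ₁ = 3 − 2β ∈ (1, 3/2). -/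
/-!
Write the momentum-conserving triples as `(j + m, j + m + n, j + n)`; resonance then reads
`m ⊥ n`. The pairs with `m = 0` or `n = 0` contribute at most `2 ‖a‖²_{l²} |a_j|`. On the
remaining pairs, Cauchy–Schwarz against the kernel `⟨j+m⟩^{-2β} ⟨j+n⟩^{-2β}` bounds the square
of their contribution by `K · ∑_{m,n} ⟨j+m⟩^{2β} |a_{j+m}|² |a_{j+m+n}|² ⟨j+n⟩^{2β} |a_{j+n}|²`,
whose sum over `j` is `K ‖a‖²_{l²} ‖a‖⁴_{h^β}`. The kernel is bounded uniformly in `j` once its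
exponents are shifted to `-2(β + 1/4)` on the smaller and `-2(β - 1/4)` on the larger weight:
for fixed `m ≠ 0` the points `j + n` lie on a line, along which `∑_n ⟨j+n⟩^{-2(β-1/4)}` is
bounded since `2(β - 1/4) > 1`, while `∑_m ⟨j+m⟩^{-2(β+1/4)}` converges since
`2(β + 1/4) > 2`. Finally
`‖a‖_{h^β} ≤ ‖a‖_{l²}^{1-β} ‖a‖_{h¹}^β` by Hölder.
-/

noncomputable section

namespace ResonantNonlinearity

open Finset Function

lemma tsum_ite_fst_eq_zero {α β M : Type*} [Zero α] [DecidableEq α] [AddCommMonoid M]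
    [TopologicalSpace M] (f : α × β → M) :
    ∑' q, (if q.1 = 0 then f q else 0) = ∑' b, f (0, b) := by
  rw [← (Prod.mk_right_injective 0).tsum_eq]
  · simp
  · intro q hq
    have : q.1 = 0 := by by_contra h; simp [h] at hq
    exact ⟨q.2, by rw [← this]⟩

lemma tsum_ite_snd_eq_zero {α β M : Type*} [Zero β] [DecidableEq β] [AddCommMonoid M]
    [TopologicalSpace M] (f : α × β → M) :
    ∑' q, (if q.2 = 0 then f q else 0) = ∑' a, f (a, 0) := by
  rw [← (Equiv.prodComm β α).tsum_eq]
  exact tsum_ite_fst_eq_zero (f ∘ Prod.swap)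

lemma support_ite_subset {α M : Type*} [Zero M] (p : α → Prop) [DecidablePred p] (f : α → M) :
    support (fun x => if p x then f x else 0) ⊆ support f := fun x hx => by
  by_contra h
  rw [notMem_support] at h
  simp [h] at hx

lemma tsum_mul_tsum_mul_tsum_of_nonneg {α β γ : Type*} {f : α → ℝ} {g : β → ℝ} {h : γ → ℝ}
    (hf : Summable f) (hg : Summable g) (hh : Summable h) (hf0 : 0 ≤ f) (hg0 : 0 ≤ g)
    (hh0 : 0 ≤ h) :
    Summable (fun x : α × β × γ => f x.1 * g x.2.1 * h x.2.2) ∧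
      ∑' x : α × β × γ, f x.1 * g x.2.1 * h x.2.2 = (∑' k, f k) * (∑' k, g k) * (∑' k, h k) := by
  have hgh := hg.mul_of_nonneg hh hg0 hh0
  have hfgh := hf.mul_of_nonneg hgh hf0 fun _ => mul_nonneg (hg0 _) (hh0 _)
  refine ⟨hfgh.congr fun _ => (mul_assoc ..).symm, ?_⟩
  calc ∑' x : α × β × γ, f x.1 * g x.2.1 * h x.2.2
      = ∑' x : α × β × γ, f x.1 * (g x.2.1 * h x.2.2) := tsum_congr fun _ => mul_assoc ..
    _ = (∑' k, f k) * ∑' y : β × γ, g y.1 * h y.2 := (hf.tsum_mul_tsum hgh hfgh).symm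
    _ = (∑' k, f k) * (∑' k, g k) * (∑' k, h k) := by rw [← hg.tsum_mul_tsum hh hgh, mul_assoc]

section TranslatedTriple

variable {G : Type*} [AddCommGroup G] {f g h : G → ℝ}

def translateTriple : G × G × G ≃ G × G × G where
  toFun x := (x.1 + x.2.1, x.1 + x.2.1 + x.2.2, x.1 + x.2.2)
  invFun y := (y.1 + y.2.2 - y.2.1, y.2.1 - y.2.2, y.2.1 - y.1)
  left_inv x := by ext <;> simp only <;> abel
  right_inv y := by ext <;> simp only <;> abel

lemma summable_translateTriple (hf : Summable f) (hg : Summable g) (hh : Summable h)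
    (hf0 : 0 ≤ f) (hg0 : 0 ≤ g) (hh0 : 0 ≤ h) :
    Summable fun x : G × G × G => f (x.1 + x.2.1) * g (x.1 + x.2.1 + x.2.2) * h (x.1 + x.2.2) :=
  translateTriple.summable_iff.2 (tsum_mul_tsum_mul_tsum_of_nonneg hf hg hh hf0 hg0 hh0).1

lemma tsum_tsum_translateTriple (hf : Summable f) (hg : Summable g) (hh : Summable h)
    (hf0 : 0 ≤ f) (hg0 : 0 ≤ g) (hh0 : 0 ≤ h) :
    ∑' j, ∑' q : G × G, f (j + q.1) * g (j + q.1 + q.2) * h (j + q.2) =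
      (∑' k, f k) * (∑' k, g k) * (∑' k, h k) := by
  have hT := summable_translateTriple hf hg hh hf0 hg0 hh0
  rw [← hT.tsum_prod' hT.prod_factor]
  exact (translateTriple.tsum_eq fun y : G × G × G => f y.1 * g y.2.1 * h y.2.2).trans
    (tsum_mul_tsum_mul_tsum_of_nonneg hf hg hh hf0 hg0 hh0).2

end TranslatedTriple

lemma rpow_neg_mul_rpow_neg_le_of_le {x y β ε : ℝ} (hx : 0 < x) (hxy : x ≤ y) (hε : 0 ≤ ε) :
    x ^ (-β) * y ^ (-β) ≤ x ^ (-(β + ε)) * y ^ (-(β - ε)) := by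
  have hy : 0 < y := hx.trans_le hxy
  calc x ^ (-β) * y ^ (-β) = x ^ (-β) * (y ^ (-ε) * y ^ (-(β - ε))) := by
        rw [← Real.rpow_add hy]; ring_nf
    _ ≤ x ^ (-β) * (x ^ (-ε) * y ^ (-(β - ε))) := by
        refine mul_le_mul_of_nonneg_left (mul_le_mul_of_nonneg_right ?_ (by positivity))
          (by positivity)
        exact Real.rpow_le_rpow_of_nonpos hx hxy (by linarith)
    _ = x ^ (-(β + ε)) * y ^ (-(β - ε)) := by
        rw [← mul_assoc, ← Real.rpow_add hx]; ring_nf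

lemma rpow_neg_mul_rpow_neg_le {x y β ε : ℝ} (hx : 0 < x) (hy : 0 < y) (hε : 0 ≤ ε) :
    x ^ (-β) * y ^ (-β) ≤ x ^ (-(β + ε)) * y ^ (-(β - ε)) + y ^ (-(β + ε)) * x ^ (-(β - ε)) := by
  rcases le_total x y with hxy | hyx
  · exact le_add_of_le_of_nonneg (rpow_neg_mul_rpow_neg_le_of_le hx hxy hε) (by positivity)
  · rw [mul_comm]
    exact le_add_of_nonneg_of_le (by positivity) (rpow_neg_mul_rpow_neg_le_of_le hy hyx hε)

lemma two_mul_pow_three_add_le {x y z c β : ℝ} (hx : 0 ≤ x) (hxy : x ≤ y) (hz : 0 ≤ z)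
    (hβ₀ : 0 ≤ β) (hβ₁ : β ≤ 1) (hzxy : z ≤ x ^ (1 - β) * y ^ β) (hc : 0 ≤ c) :
    2 * x ^ 3 + c * x * z ^ 2 ≤ (2 + c) * x ^ (3 - 2 * β) * y ^ (2 * β) := by
  have hy : 0 ≤ y := hx.trans hxy
  have hx3 : x ^ 3 ≤ x ^ (3 - 2 * β) * y ^ (2 * β) := by
    calc x ^ 3 = x ^ (3 - 2 * β) * x ^ (2 * β) := by
          rw [← Real.rpow_add' hx (by norm_num), sub_add_cancel, ← Real.rpow_natCast]; norm_num
      _ ≤ x ^ (3 - 2 * β) * y ^ (2 * β) := by gcongr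
  have hxz : x * z ^ 2 ≤ x ^ (3 - 2 * β) * y ^ (2 * β) := by
    calc x * z ^ 2 ≤ x * (x ^ (1 - β) * y ^ β) ^ 2 := by gcongr
      _ = x ^ (3 - 2 * β) * y ^ (2 * β) := by
          rw [mul_pow, ← Real.rpow_natCast, ← Real.rpow_natCast (y ^ β), ← Real.rpow_mul hx,
            ← Real.rpow_mul hy, ← mul_assoc, ← Real.rpow_one_add' hx (by norm_num; linarith)]
          norm_num; ring_nf
  calc 2 * x ^ 3 + c * x * z ^ 2 = 2 * x ^ 3 + c * (x * z ^ 2) := by ring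
    _ ≤ 2 * (x ^ (3 - 2 * β) * y ^ (2 * β)) + c * (x ^ (3 - 2 * β) * y ^ (2 * β)) := by gcongr
    _ = (2 + c) * x ^ (3 - 2 * β) * y ^ (2 * β) := by ring

/-- `weight k = ⟨k⟩²`. -/
def weight (k : ℤ × ℤ) : ℝ := 1 + nsq k

def dot (m n : ℤ × ℤ) : ℤ := m.1 * n.1 + m.2 * n.2

lemma dot_comm (m n : ℤ × ℤ) : dot m n = dot n m := by
  unfold dot; ring

lemma sq_dot_add_sq_dot_rot (v m : ℤ × ℤ) :
    dot v m ^ 2 + dot v (-m.2, m.1) ^ 2 = nsq v * nsq m := by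
  unfold dot nsq; ring

lemma nsq_nonneg (k : ℤ × ℤ) : 0 ≤ nsq k := by
  unfold nsq; positivity

lemma one_le_nsq {k : ℤ × ℤ} (hk : k ≠ 0) : 1 ≤ nsq k := by
  have : k.1 ≠ 0 ∨ k.2 ≠ 0 := by
    contrapose! hk
    exact Prod.ext hk.1 hk.2
  unfold nsq
  rcases this with h | h <;> nlinarith [sq_nonneg k.1, sq_nonneg k.2, sq_pos_of_ne_zero h]

lemma one_le_weight (k : ℤ × ℤ) : 1 ≤ weight k := by
  have : (0 : ℝ) ≤ nsq k := by exact_mod_cast nsq_nonneg k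
  unfold weight; linarith

lemma weight_pos (k : ℤ × ℤ) : 0 < weight k := one_pos.trans_le (one_le_weight k)

lemma weight_rpow_pos (k : ℤ × ℤ) (s : ℝ) : 0 < weight k ^ s :=
  Real.rpow_pos_of_pos (weight_pos k) s

lemma hnorm_eq_sqrt (s : ℝ) (a : ℤ × ℤ → ℂ) :
    hnorm s a = √(∑' j, weight j ^ s * ‖a j‖ ^ 2) := by
  rw [hnorm, Real.sqrt_eq_rpow]; rfl

lemma hnorm_nonneg (s : ℝ) (a : ℤ × ℤ → ℂ) : 0 ≤ hnorm s a := by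
  rw [hnorm_eq_sqrt]; exact Real.sqrt_nonneg _

lemma hnorm_sq (s : ℝ) (a : ℤ × ℤ → ℂ) : hnorm s a ^ 2 = ∑' j, weight j ^ s * ‖a j‖ ^ 2 := by
  rw [hnorm_eq_sqrt, Real.sq_sqrt (tsum_nonneg fun j => mul_nonneg (weight_rpow_pos j s).le
    (sq_nonneg _))]

lemma hnorm_zero_eq_sqrt (a : ℤ × ℤ → ℂ) : hnorm 0 a = √(∑' j, ‖a j‖ ^ 2) := by
  simp only [hnorm_eq_sqrt, Real.rpow_zero, one_mul]

lemma summable_norm_sq {a : ℤ × ℤ → ℂ} (ha : (support a).Finite) :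
    Summable fun k => ‖a k‖ ^ 2 :=
  summable_of_hasFiniteSupport (ha.subset fun k hk => by simpa using hk)

lemma summable_weight_rpow_mul_norm_sq {a : ℤ × ℤ → ℂ} (ha : (support a).Finite) (s : ℝ) :
    Summable fun k => weight k ^ s * ‖a k‖ ^ 2 :=
  summable_of_hasFiniteSupport (ha.subset fun k hk => by simp_all)

lemma hnorm_mono {a : ℤ × ℤ → ℂ} (ha : (support a).Finite) {s t : ℝ} (hst : s ≤ t) :
    hnorm s a ≤ hnorm t a := by
  rw [hnorm_eq_sqrt, hnorm_eq_sqrt]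
  refine Real.sqrt_le_sqrt ((summable_weight_rpow_mul_norm_sq ha s).tsum_le_tsum (fun k => ?_)
    (summable_weight_rpow_mul_norm_sq ha t))
  exact mul_le_mul_of_nonneg_right
    (Real.rpow_le_rpow_of_exponent_le (one_le_weight k) hst) (sq_nonneg _)

lemma hnorm_interpolate {a : ℤ × ℤ → ℂ} (ha : (support a).Finite) (s t : ℝ) {θ : ℝ}
    (hθ₀ : 0 < θ) (hθ₁ : θ ≤ 1) :
    hnorm ((1 - θ) * s + θ * t) a ≤ hnorm s a ^ (1 - θ) * hnorm t a ^ θ := by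
  have hsupp (r : ℝ) : support (fun k => weight k ^ r * ‖a k‖ ^ 2) ⊆ ha.toFinset := by
    rw [ha.coe_toFinset]; exact fun k hk => by simp_all
  have hholder := Real.inner_le_weight_mul_Lp_of_nonneg ha.toFinset (p := θ⁻¹)
    (one_le_inv₀ hθ₀ |>.2 hθ₁) (fun k => weight k ^ s * ‖a k‖ ^ 2)
    (fun k => weight k ^ (θ * (t - s)))
    (fun k => mul_nonneg (weight_rpow_pos k s).le (sq_nonneg _)) (fun k => (weight_rpow_pos _ _).le)
  set T : ℝ → ℝ := fun r => ∑' k, weight k ^ r * ‖a k‖ ^ 2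
  have hT0 (r : ℝ) : 0 ≤ T r :=
    tsum_nonneg fun k => mul_nonneg (weight_rpow_pos k r).le (sq_nonneg _)
  have key : T ((1 - θ) * s + θ * t) ≤ T s ^ (1 - θ) * T t ^ θ := by
    have e₁ (k : ℤ × ℤ) : weight k ^ ((1 - θ) * s + θ * t) * ‖a k‖ ^ 2 =
        weight k ^ s * ‖a k‖ ^ 2 * weight k ^ (θ * (t - s)) := by
      rw [mul_right_comm, ← Real.rpow_add (weight_pos k)]; ring_nf
    have e₂ (k : ℤ × ℤ) : weight k ^ t * ‖a k‖ ^ 2 =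
        weight k ^ s * ‖a k‖ ^ 2 * (weight k ^ (θ * (t - s))) ^ θ⁻¹ := by
      rw [← Real.rpow_mul (weight_pos k).le, mul_right_comm, ← Real.rpow_add (weight_pos k),
        mul_comm θ, mul_assoc, mul_inv_cancel₀ hθ₀.ne', mul_one, add_sub_cancel]
    rw [inv_inv] at hholder
    simp only [T, tsum_eq_sum' (hsupp _)]
    rw [sum_congr rfl fun k _ => e₁ k, sum_congr rfl fun k _ => e₂ k]
    exact hholder
  calc hnorm ((1 - θ) * s + θ * t) a = T ((1 - θ) * s + θ * t) ^ (1 / 2 : ℝ) := rfl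
    _ ≤ (T s ^ (1 - θ) * T t ^ θ) ^ (1 / 2 : ℝ) := Real.rpow_le_rpow (hT0 _) key (by norm_num)
    _ = (T s ^ (1 / 2 : ℝ)) ^ (1 - θ) * (T t ^ (1 / 2 : ℝ)) ^ θ := by
        rw [Real.mul_rpow (Real.rpow_nonneg (hT0 _) _) (Real.rpow_nonneg (hT0 _) _),
          ← Real.rpow_mul (hT0 _), ← Real.rpow_mul (hT0 _), ← Real.rpow_mul (hT0 _),
          ← Real.rpow_mul (hT0 _), mul_comm (1 - θ), mul_comm θ]

lemma hnorm_zero_le_of_norm_le_add {b : ℤ × ℤ → ℂ} {x y : ℤ × ℤ → ℝ} (hx0 : 0 ≤ x) (hy0 : 0 ≤ y)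
    (hx : Summable fun j => x j ^ 2) (hy : Summable fun j => y j ^ 2)
    (hb : ∀ j, ‖b j‖ ≤ x j + y j) :
    hnorm 0 b ≤ √(∑' j, x j ^ 2) + √(∑' j, y j ^ 2) := by
  have hmink := Real.Lp_add_le_tsum_of_nonneg (p := 2) one_le_two hx0 hy0
    (by simpa only [Real.rpow_two] using hx) (by simpa only [Real.rpow_two] using hy)
  simp only [Real.rpow_two, ← Real.sqrt_eq_rpow] at hmink
  have hle (j : ℤ × ℤ) : ‖b j‖ ^ 2 ≤ (x j + y j) ^ 2 :=
    pow_le_pow_left₀ (norm_nonneg _) (hb j) 2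
  rw [hnorm_zero_eq_sqrt]
  exact (Real.sqrt_le_sqrt (hmink.1.of_nonneg_of_le (fun j => sq_nonneg _) hle |>.tsum_le_tsum hle
    hmink.1)).trans hmink.2

lemma summable_one_add_sq_rpow_neg {σ : ℝ} (hσ : 1 / 2 < σ) :
    Summable fun k : ℤ => (1 + (k : ℝ) ^ 2) ^ (-σ) := by
  refine Summable.of_norm_bounded_eventually (Real.summable_abs_int_rpow (b := 2 * σ) (by linarith))
    ((Filter.eventually_cofinite_ne 0).mono fun k hk => ?_)
  have hk2 : (0 : ℝ) < (k : ℝ) ^ 2 := by positivity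
  rw [Real.norm_of_nonneg (by positivity)]
  calc (1 + (k : ℝ) ^ 2) ^ (-σ) ≤ ((k : ℝ) ^ 2) ^ (-σ) :=
        Real.rpow_le_rpow_of_nonpos hk2 (by linarith) (by linarith)
    _ = |(k : ℝ)| ^ ((2 : ℕ) * (-σ)) := by
        rw [← sq_abs, ← Real.rpow_natCast, ← Real.rpow_mul (abs_nonneg _)]
    _ = _ := by push_cast; ring_nf

lemma summable_weight_rpow_neg {τ : ℝ} (hτ : 1 < τ) : Summable fun k => weight k ^ (-τ) := by
  have h1 := summable_one_add_sq_rpow_neg (σ := τ / 2) (by linarith)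
  refine (h1.mul_of_nonneg h1 (fun _ => by positivity) (fun _ => by positivity)).of_nonneg_of_le
    (fun k => (weight_rpow_pos k _).le) fun k => ?_
  have hw : weight k = 1 + (k.1 : ℝ) ^ 2 + (k.2 : ℝ) ^ 2 := by
    simp only [weight, nsq]; push_cast; ring
  have hprod : (1 + (k.1 : ℝ) ^ 2) * (1 + (k.2 : ℝ) ^ 2) ≤ weight k ^ (2 : ℝ) := by
    rw [Real.rpow_two, hw]
    nlinarith [sq_nonneg ((k.1 : ℝ) * k.2), sq_nonneg (k.1 : ℝ), sq_nonneg (k.2 : ℝ)]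
  calc weight k ^ (-τ) = (weight k ^ (2 : ℝ)) ^ (-(τ / 2)) := by
        rw [← Real.rpow_mul (weight_pos k).le]; ring_nf
    _ ≤ ((1 + (k.1 : ℝ) ^ 2) * (1 + (k.2 : ℝ) ^ 2)) ^ (-(τ / 2)) :=
        Real.rpow_le_rpow_of_nonpos (by positivity) hprod (by linarith)
    _ = _ := Real.mul_rpow (by positivity) (by positivity)

lemma rpow_neg_le_four_rpow_mul_floor {σ u W : ℝ} (hσ : 0 ≤ σ) (hW : 1 + u ^ 2 ≤ W) :
    W ^ (-σ) ≤ 4 ^ σ * (1 + (⌊u⌋ : ℝ) ^ 2) ^ (-σ) := by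
  have hfloor : 1 + (⌊u⌋ : ℝ) ^ 2 ≤ 4 * W := by
    have h0 := Int.floor_le u
    have h1 := Int.lt_floor_add_one u
    nlinarith [sq_nonneg (2 * u - ⌊u⌋),
      mul_nonneg (sub_nonneg.2 h0) (by linarith : (0 : ℝ) ≤ ⌊u⌋ + 1 - u)]
  have hW0 : 0 < W := by nlinarith
  calc W ^ (-σ) = 4 ^ σ * (4 * W) ^ (-σ) := by
        rw [Real.mul_rpow (by norm_num) hW0.le, ← mul_assoc, ← Real.rpow_add (by norm_num),
          add_neg_cancel, Real.rpow_zero, one_mul]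
    _ ≤ 4 ^ σ * (1 + (⌊u⌋ : ℝ) ^ 2) ^ (-σ) := mul_le_mul_of_nonneg_left
        (Real.rpow_le_rpow_of_nonpos (by positivity) hfloor (by linarith)) (by positivity)

def lineConst (σ : ℝ) : ℝ := 4 ^ σ * ∑' k : ℤ, (1 + (k : ℝ) ^ 2) ^ (-σ)

lemma lineConst_nonneg (σ : ℝ) : 0 ≤ lineConst σ := by
  unfold lineConst
  exact mul_nonneg (by positivity) (tsum_nonneg fun _ => by positivity)

/-- The points `j + n`, `n ⊥ m`, lie on a line, and the coordinate `u` along it separates them by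
at least `1`; hence distinct points have distinct `⌊u⌋`. -/
lemma sum_weight_rpow_neg_le_lineConst {σ : ℝ} (hσ : 1 / 2 < σ) {m : ℤ × ℤ} (hm : m ≠ 0)
    (j : ℤ × ℤ) (s : Finset (ℤ × ℤ)) (hs : ∀ n ∈ s, dot n m = 0) :
    ∑ n ∈ s, weight (j + n) ^ (-σ) ≤ lineConst σ := by
  have hm0 : (0 : ℝ) < nsq m := by exact_mod_cast one_le_nsq hm
  set u : ℤ × ℤ → ℝ := fun n => dot (j + n) (-m.2, m.1) / √(nsq m)
  have hu_sq (n : ℤ × ℤ) : u n ^ 2 = (dot (j + n) (-m.2, m.1) : ℝ) ^ 2 / nsq m := by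
    simp only [u, div_pow, Real.sq_sqrt hm0.le]
  have hu_le (n : ℤ × ℤ) : 1 + u n ^ 2 ≤ weight (j + n) := by
    have h := sq_dot_add_sq_dot_rot (j + n) m
    have h' : ((dot (j + n) (-m.2, m.1)) : ℝ) ^ 2 ≤ nsq (j + n) * nsq m := by
      exact_mod_cast h ▸ le_add_of_nonneg_left (sq_nonneg _)
    rw [hu_sq, weight]
    have := (div_le_iff₀ hm0).2 h'
    linarith
  have hinj : Set.InjOn (fun n => ⌊u n⌋) s := by
    intro x hx y hy hxy
    by_contra hne
    have hsep : (u x - u y) ^ 2 = nsq (x - y) := by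
      have hperp : dot (x - y) m = 0 := by
        have := hs x hx; have := hs y hy
        simp only [dot, Prod.fst_sub, Prod.snd_sub] at *; linarith
      have hdiff : dot (j + x) (-m.2, m.1) - dot (j + y) (-m.2, m.1) = dot (x - y) (-m.2, m.1) := by
        simp only [dot, Prod.fst_sub, Prod.snd_sub, Prod.fst_add, Prod.snd_add]; ring
      have hlag := sq_dot_add_sq_dot_rot (x - y) m
      rw [hperp] at hlag
      simp only [u, ← sub_div, div_pow, Real.sq_sqrt hm0.le]
      rw [div_eq_iff hm0.ne']
      exact_mod_cast (by rw [← hdiff] at hlag; linarith :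
        (dot (j + x) (-m.2, m.1) - dot (j + y) (-m.2, m.1)) ^ 2 = nsq (x - y) * nsq m)
    have h1 : (1 : ℝ) ≤ nsq (x - y) := by exact_mod_cast one_le_nsq (sub_ne_zero.2 hne)
    have h2 := abs_lt.1 (Int.abs_sub_lt_one_of_floor_eq_floor hxy)
    nlinarith
  calc ∑ n ∈ s, weight (j + n) ^ (-σ) ≤ ∑ n ∈ s, 4 ^ σ * (1 + (⌊u n⌋ : ℝ) ^ 2) ^ (-σ) :=
        sum_le_sum fun n _ => rpow_neg_le_four_rpow_mul_floor (by linarith) (hu_le n)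
    _ = 4 ^ σ * ∑ k ∈ s.image (fun n => ⌊u n⌋), (1 + (k : ℝ) ^ 2) ^ (-σ) := by
        rw [sum_image hinj, mul_sum]
    _ ≤ lineConst σ := by
        unfold lineConst
        gcongr
        exact (summable_one_add_sq_rpow_neg hσ).sum_le_tsum _ fun _ _ => by positivity

def weightSum (τ : ℝ) : ℝ := ∑' k, weight k ^ (-τ)

lemma sum_weight_rpow_neg_mul_le {τ σ : ℝ} (hτ : 1 < τ) (hσ : 1 / 2 < σ) (j : ℤ × ℤ)
    (s : Finset ((ℤ × ℤ) × (ℤ × ℤ))) (hs : ∀ q ∈ s, q.1 ≠ 0 ∧ dot q.1 q.2 = 0) :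
    ∑ q ∈ s, weight (j + q.1) ^ (-τ) * weight (j + q.2) ^ (-σ) ≤ weightSum τ * lineConst σ := by
  classical
  rw [sum_finset_product s (s.image Prod.fst) (fun m => (s.filter (·.1 = m)).image Prod.snd)
    fun q => by
      simp only [mem_image, Prod.exists, exists_and_right, exists_eq_right, mem_filter,
        Prod.mk.eta, iff_and_self]
      exact fun h => ⟨_, _, h⟩]
  have hsum : Summable fun m => weight (j + m) ^ (-τ) :=
    (Equiv.addLeft j).summable_iff.2 (summable_weight_rpow_neg hτ)
  calc ∑ m ∈ s.image Prod.fst, ∑ n ∈ (s.filter (·.1 = m)).image Prod.snd,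
        weight (j + m) ^ (-τ) * weight (j + n) ^ (-σ)
      ≤ ∑ m ∈ s.image Prod.fst, weight (j + m) ^ (-τ) * lineConst σ := by
        refine sum_le_sum fun m hm => ?_
        rw [← mul_sum]
        obtain ⟨q, hq, rfl⟩ := mem_image.1 hm
        refine mul_le_mul_of_nonneg_left (sum_weight_rpow_neg_le_lineConst hσ (hs q hq).1 j _
          fun n hn => ?_) (weight_rpow_pos _ _).le
        obtain ⟨p, hp, rfl⟩ := mem_image.1 hn
        obtain ⟨hps, hpq⟩ := mem_filter.1 hp
        rw [dot_comm, ← hpq]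
        exact (hs p hps).2
    _ = (∑ m ∈ s.image Prod.fst, weight (j + m) ^ (-τ)) * lineConst σ := (sum_mul ..).symm
    _ ≤ weightSum τ * lineConst σ := by
        refine mul_le_mul_of_nonneg_right ?_ (lineConst_nonneg σ)
        rw [weightSum, ← (Equiv.addLeft j).tsum_eq]
        exact hsum.sum_le_tsum _ fun _ _ => (weight_rpow_pos _ _).le

def IsNondegResonant (q : (ℤ × ℤ) × (ℤ × ℤ)) : Prop := q.1 ≠ 0 ∧ q.2 ≠ 0 ∧ dot q.1 q.2 = 0

instance : DecidablePred IsNondegResonant := fun _ => instDecidableAnd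

def kernelConst (β : ℝ) : ℝ := 2 * weightSum (β + 1 / 4) * lineConst (β - 1 / 4)

lemma kernelConst_nonneg (β : ℝ) : 0 ≤ kernelConst β :=
  mul_nonneg (mul_nonneg zero_le_two (tsum_nonneg fun _ => (weight_rpow_pos _ _).le))
    (lineConst_nonneg _)

lemma sum_kernel_le {β : ℝ} (hβ : 3 / 4 < β) (j : ℤ × ℤ) (s : Finset ((ℤ × ℤ) × (ℤ × ℤ)))
    (hs : ∀ q ∈ s, IsNondegResonant q) :
    ∑ q ∈ s, weight (j + q.1) ^ (-β) * weight (j + q.2) ^ (-β) ≤ kernelConst β := by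
  have hswap : ∀ q ∈ s.image Prod.swap, q.1 ≠ 0 ∧ dot q.1 q.2 = 0 := by
    simp only [mem_image, forall_exists_index, and_imp]
    rintro _ q hq rfl
    exact ⟨(hs q hq).2.1, dot_comm q.1 q.2 ▸ (hs q hq).2.2⟩
  calc ∑ q ∈ s, weight (j + q.1) ^ (-β) * weight (j + q.2) ^ (-β)
      ≤ ∑ q ∈ s, (weight (j + q.1) ^ (-(β + 1 / 4)) * weight (j + q.2) ^ (-(β - 1 / 4)) +
          weight (j + q.2) ^ (-(β + 1 / 4)) * weight (j + q.1) ^ (-(β - 1 / 4))) :=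
        sum_le_sum fun q _ => rpow_neg_mul_rpow_neg_le (weight_pos _) (weight_pos _) (by norm_num)
    _ = ∑ q ∈ s, weight (j + q.1) ^ (-(β + 1 / 4)) * weight (j + q.2) ^ (-(β - 1 / 4)) +
          ∑ q ∈ s.image Prod.swap,
            weight (j + q.1) ^ (-(β + 1 / 4)) * weight (j + q.2) ^ (-(β - 1 / 4)) := by
        rw [sum_add_distrib, sum_image Prod.swap_injective.injOn]; rfl
    _ ≤ weightSum (β + 1 / 4) * lineConst (β - 1 / 4) +
          weightSum (β + 1 / 4) * lineConst (β - 1 / 4) :=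
        add_le_add
          (sum_weight_rpow_neg_mul_le (by linarith) (by linarith) j s
            fun q hq => ⟨(hs q hq).1, (hs q hq).2.2⟩)
          (sum_weight_rpow_neg_mul_le (by linarith) (by linarith) j _ hswap)
    _ = kernelConst β := by unfold kernelConst; ring

lemma nsq_resonance (j m n : ℤ × ℤ) :
    nsq (j + m) - nsq (j + m + n) + nsq (j + n) = nsq j - 2 * dot m n := by
  simp only [nsq, dot, Prod.fst_add, Prod.snd_add]; ring

lemma Fnl_eq_tsum (a : ℤ × ℤ → ℂ) (j : ℤ × ℤ) :
    Fnl a j = ∑' q : (ℤ × ℤ) × (ℤ × ℤ), if dot q.1 q.2 = 0 then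
      a (j + q.1) * (starRingEnd ℂ) (a (j + q.1 + q.2)) * a (j + q.2) else 0 := by
  have hinj : Injective fun q : (ℤ × ℤ) × (ℤ × ℤ) => (j + q.1, j + q.1 + q.2, j + q.2) := by
    rintro ⟨m, n⟩ ⟨m', n'⟩ h
    simp only [Prod.mk.injEq, add_right_inj] at h
    rw [h.1, h.2.2]
  rw [Fnl, ← hinj.tsum_eq]
  · congr 1
    ext q
    refine if_congr ?_ rfl rfl
    dsimp only
    rw [nsq_resonance]
    constructor
    · rintro ⟨-, h⟩
      linarith
    · intro h
      exact ⟨by abel, by rw [h]; ring⟩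
  · intro p hp
    have hp : p.1 - p.2.1 + p.2.2 = j := by
      by_contra h
      simp [h] at hp
    refine ⟨(p.1 - j, p.2.2 - j),
      Prod.ext (add_sub_cancel j p.1) (Prod.ext ?_ (add_sub_cancel j p.2.2))⟩
    dsimp only
    rw [← hp]
    abel

def resTerm (a : ℤ × ℤ → ℂ) (j : ℤ × ℤ) (q : (ℤ × ℤ) × (ℤ × ℤ)) : ℝ :=
  ‖a (j + q.1)‖ * ‖a (j + q.1 + q.2)‖ * ‖a (j + q.2)‖

lemma resTerm_nonneg (a : ℤ × ℤ → ℂ) (j : ℤ × ℤ) (q : (ℤ × ℤ) × (ℤ × ℤ)) :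
    0 ≤ resTerm a j q := by
  unfold resTerm; positivity

lemma finite_support_resTerm {a : ℤ × ℤ → ℂ} (ha : (support a).Finite) (j : ℤ × ℤ) :
    (support (resTerm a j)).Finite := by
  refine ((ha.image (· - j)).prod (ha.image (· - j))).subset fun q hq => ?_
  have h : a (j + q.1) ≠ 0 ∧ a (j + q.2) ≠ 0 := by
    by_contra h
    rw [not_and_or, not_not, not_not] at h
    rcases h with h | h <;> simp [resTerm, h] at hq
  exact ⟨⟨j + q.1, h.1, add_sub_cancel_left j q.1⟩, ⟨j + q.2, h.2, add_sub_cancel_left j q.2⟩⟩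

lemma summable_ite_resTerm {a : ℤ × ℤ → ℂ} (ha : (support a).Finite) (j : ℤ × ℤ)
    (p : (ℤ × ℤ) × (ℤ × ℤ) → Prop) [DecidablePred p] :
    Summable fun q => if p q then resTerm a j q else 0 :=
  summable_of_hasFiniteSupport ((finite_support_resTerm ha j).subset (support_ite_subset _ _))

def nondegPart (a : ℤ × ℤ → ℂ) (j : ℤ × ℤ) : ℝ :=
  ∑' q, if IsNondegResonant q then resTerm a j q else 0

lemma nondegPart_nonneg (a : ℤ × ℤ → ℂ) (j : ℤ × ℤ) : 0 ≤ nondegPart a j :=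
  tsum_nonneg fun q => by split_ifs; exacts [resTerm_nonneg a j q, le_rfl]

lemma norm_Fnl_le {a : ℤ × ℤ → ℂ} (ha : (support a).Finite) (j : ℤ × ℤ) :
    ‖Fnl a j‖ ≤ 2 * (∑' k, ‖a k‖ ^ 2) * ‖a j‖ + nondegPart a j := by
  have hdeg₁ : ∑' q, (if q.1 = 0 then resTerm a j q else 0) = (∑' k, ‖a k‖ ^ 2) * ‖a j‖ := by
    rw [tsum_ite_fst_eq_zero, ← (Equiv.addLeft j).tsum_eq (fun k => ‖a k‖ ^ 2), ← tsum_mul_right]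
    congr 1
    ext n
    simp only [resTerm, Equiv.coe_addLeft, add_zero]
    ring
  have hdeg₂ : ∑' q, (if q.2 = 0 then resTerm a j q else 0) = (∑' k, ‖a k‖ ^ 2) * ‖a j‖ := by
    rw [tsum_ite_snd_eq_zero, ← (Equiv.addLeft j).tsum_eq (fun k => ‖a k‖ ^ 2), ← tsum_mul_right]
    congr 1
    ext n
    simp only [resTerm, Equiv.coe_addLeft, add_zero]
    ring
  have hnorm_ite (q : (ℤ × ℤ) × (ℤ × ℤ)) : ‖if dot q.1 q.2 = 0 then
      a (j + q.1) * (starRingEnd ℂ) (a (j + q.1 + q.2)) * a (j + q.2) else 0‖ =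
      if dot q.1 q.2 = 0 then resTerm a j q else 0 := by
    split_ifs <;> simp [resTerm]
  have hsplit (q : (ℤ × ℤ) × (ℤ × ℤ)) : (if dot q.1 q.2 = 0 then resTerm a j q else 0) ≤
      (if q.1 = 0 then resTerm a j q else 0) + (if q.2 = 0 then resTerm a j q else 0) +
        (if IsNondegResonant q then resTerm a j q else 0) := by
    have := resTerm_nonneg a j q
    unfold IsNondegResonant
    split_ifs <;> simp_all
  calc ‖Fnl a j‖ ≤ ∑' q, (if dot q.1 q.2 = 0 then resTerm a j q else 0) := by
        rw [Fnl_eq_tsum, ← tsum_congr hnorm_ite]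
        exact norm_tsum_le_tsum_norm
          ((summable_ite_resTerm ha j _).congr fun q => (hnorm_ite q).symm)
    _ ≤ ∑' q, ((if q.1 = 0 then resTerm a j q else 0) + (if q.2 = 0 then resTerm a j q else 0) +
          (if IsNondegResonant q then resTerm a j q else 0)) :=
        Summable.tsum_le_tsum hsplit (summable_ite_resTerm ha j _)
          (((summable_ite_resTerm ha j _).add (summable_ite_resTerm ha j _)).add
            (summable_ite_resTerm ha j _))
    _ = 2 * (∑' k, ‖a k‖ ^ 2) * ‖a j‖ + nondegPart a j := by
        rw [Summable.tsum_add ((summable_ite_resTerm ha j _).add (summable_ite_resTerm ha j _))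
            (summable_ite_resTerm ha j _),
          Summable.tsum_add (summable_ite_resTerm ha j _) (summable_ite_resTerm ha j _),
          hdeg₁, hdeg₂, nondegPart]
        ring

lemma resTerm_eq_sqrt_mul_sqrt (β : ℝ) (a : ℤ × ℤ → ℂ) (j : ℤ × ℤ) (q : (ℤ × ℤ) × (ℤ × ℤ)) :
    resTerm a j q = √(weight (j + q.1) ^ (-β) * weight (j + q.2) ^ (-β)) *
      √(weight (j + q.1) ^ β * ‖a (j + q.1)‖ ^ 2 * ‖a (j + q.1 + q.2)‖ ^ 2 *
        (weight (j + q.2) ^ β * ‖a (j + q.2)‖ ^ 2)) := by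
  have hcancel (k : ℤ × ℤ) : weight k ^ (-β) * weight k ^ β = 1 := by
    rw [← Real.rpow_add (weight_pos k), neg_add_cancel, Real.rpow_zero]
  rw [← Real.sqrt_mul (mul_nonneg (weight_rpow_pos _ _).le (weight_rpow_pos _ _).le),
    ← abs_of_nonneg (resTerm_nonneg a j q), ← Real.sqrt_sq_eq_abs]
  congr 1
  calc resTerm a j q ^ 2 = (weight (j + q.1) ^ (-β) * weight (j + q.1) ^ β) *
        (weight (j + q.2) ^ (-β) * weight (j + q.2) ^ β) * resTerm a j q ^ 2 := by
        rw [hcancel, hcancel, one_mul, one_mul]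
    _ = _ := by unfold resTerm; ring

lemma sq_nondegPart_le {β : ℝ} (hβ : 3 / 4 < β) {a : ℤ × ℤ → ℂ} (ha : (support a).Finite)
    (j : ℤ × ℤ) :
    nondegPart a j ^ 2 ≤ kernelConst β * ∑' q : (ℤ × ℤ) × (ℤ × ℤ),
      weight (j + q.1) ^ β * ‖a (j + q.1)‖ ^ 2 * ‖a (j + q.1 + q.2)‖ ^ 2 *
        (weight (j + q.2) ^ β * ‖a (j + q.2)‖ ^ 2) := by
  set κ : (ℤ × ℤ) × (ℤ × ℤ) → ℝ := fun q =>
    if IsNondegResonant q then weight (j + q.1) ^ (-β) * weight (j + q.2) ^ (-β) else 0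
  set Φ : (ℤ × ℤ) × (ℤ × ℤ) → ℝ := fun q =>
    weight (j + q.1) ^ β * ‖a (j + q.1)‖ ^ 2 * ‖a (j + q.1 + q.2)‖ ^ 2 *
      (weight (j + q.2) ^ β * ‖a (j + q.2)‖ ^ 2)
  have hκ0 : ∀ q, 0 ≤ κ q := fun q => by
    simp only [κ]; split_ifs
    · exact mul_nonneg (weight_rpow_pos _ _).le (weight_rpow_pos _ _).le
    · exact le_rfl
  have hΦ0 : ∀ q, 0 ≤ Φ q := fun q => by
    simp only [Φ]; have := weight_rpow_pos (j + q.1) β; have := weight_rpow_pos (j + q.2) β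
    positivity
  have hΦ : Summable Φ :=
    (summable_translateTriple (summable_weight_rpow_mul_norm_sq ha β) (summable_norm_sq ha)
      (summable_weight_rpow_mul_norm_sq ha β) (fun k => mul_nonneg (weight_rpow_pos k β).le
        (sq_nonneg _)) (fun k => sq_nonneg _) (fun k => mul_nonneg (weight_rpow_pos k β).le
        (sq_nonneg _))).prod_factor j
  have hfin := finite_support_resTerm ha j
  have hsupp : support (fun q => if IsNondegResonant q then resTerm a j q else 0) ⊆
      hfin.toFinset := by
    rw [hfin.coe_toFinset]
    exact support_ite_subset _ _
  have hpt (q : (ℤ × ℤ) × (ℤ × ℤ)) :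
      (if IsNondegResonant q then resTerm a j q else 0) = √(κ q) * √(Φ q) := by
    simp only [κ]
    split_ifs
    · exact resTerm_eq_sqrt_mul_sqrt β a j q
    · simp
  have hκ : ∑ q ∈ hfin.toFinset, κ q ≤ kernelConst β := by
    simp only [κ]
    rw [← sum_filter]
    exact sum_kernel_le hβ j _ fun q hq => (mem_filter.1 hq).2
  have hG : nondegPart a j ≤ √(kernelConst β) * √(∑' q, Φ q) := by
    rw [nondegPart, tsum_eq_sum' hsupp, sum_congr rfl fun q _ => hpt q]
    exact (Real.sum_sqrt_mul_sqrt_le _ hκ0 hΦ0).trans (mul_le_mul (Real.sqrt_le_sqrt hκ)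
      (Real.sqrt_le_sqrt (hΦ.sum_le_tsum _ fun q _ => hΦ0 q)) (Real.sqrt_nonneg _)
      (Real.sqrt_nonneg _))
  calc nondegPart a j ^ 2 ≤ (√(kernelConst β) * √(∑' q, Φ q)) ^ 2 :=
        pow_le_pow_left₀ (nondegPart_nonneg a j) hG 2
    _ = kernelConst β * ∑' q, Φ q := by
        rw [mul_pow, Real.sq_sqrt (kernelConst_nonneg β), Real.sq_sqrt (tsum_nonneg hΦ0)]

lemma summable_sq_nondegPart_and_tsum_le {β : ℝ} (hβ : 3 / 4 < β) {a : ℤ × ℤ → ℂ}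
    (ha : (support a).Finite) :
    Summable (fun j => nondegPart a j ^ 2) ∧
      ∑' j, nondegPart a j ^ 2 ≤
        kernelConst β * (hnorm β a ^ 2 * hnorm 0 a ^ 2 * hnorm β a ^ 2) := by
  have hf0 : 0 ≤ fun k => weight k ^ β * ‖a k‖ ^ 2 :=
    fun k => mul_nonneg (weight_rpow_pos k β).le (sq_nonneg _)
  have hg0 : 0 ≤ fun k => ‖a k‖ ^ 2 := fun k => sq_nonneg _
  have hf := summable_weight_rpow_mul_norm_sq ha β
  have hg := summable_norm_sq ha
  have hsum := ((summable_translateTriple hf hg hf hf0 hg0 hf0).prod).mul_left (kernelConst β)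
  have hle := sq_nondegPart_le hβ ha
  refine ⟨hsum.of_nonneg_of_le (fun j => sq_nonneg _) hle, ?_⟩
  calc ∑' j, nondegPart a j ^ 2 ≤ ∑' j, kernelConst β * ∑' q : (ℤ × ℤ) × (ℤ × ℤ),
        weight (j + q.1) ^ β * ‖a (j + q.1)‖ ^ 2 * ‖a (j + q.1 + q.2)‖ ^ 2 *
          (weight (j + q.2) ^ β * ‖a (j + q.2)‖ ^ 2) :=
        (hsum.of_nonneg_of_le (fun j => sq_nonneg _) hle).tsum_le_tsum hle hsum
    _ = kernelConst β * (hnorm β a ^ 2 * hnorm 0 a ^ 2 * hnorm β a ^ 2) := by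
        rw [tsum_mul_left, tsum_tsum_translateTriple hf hg hf hf0 hg0 hf0, hnorm_sq, hnorm_sq]
        simp only [Real.rpow_zero, one_mul]

lemma hnorm_zero_Fnl_le {β : ℝ} (hβ : 3 / 4 < β) {a : ℤ × ℤ → ℂ} (ha : (support a).Finite) :
    hnorm 0 (Fnl a) ≤ 2 * hnorm 0 a ^ 3 + √(kernelConst β) * hnorm 0 a * hnorm β a ^ 2 := by
  obtain ⟨hG, hGle⟩ := summable_sq_nondegPart_and_tsum_le hβ ha
  have hA0 := hnorm_nonneg 0 a
  have hSA : ∑' k, ‖a k‖ ^ 2 = hnorm 0 a ^ 2 := by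
    simp only [hnorm_sq, Real.rpow_zero, one_mul]
  have hx : Summable fun j => (2 * (∑' k, ‖a k‖ ^ 2) * ‖a j‖) ^ 2 := by
    simp_rw [mul_pow]
    exact (summable_norm_sq ha).mul_left _
  refine (hnorm_zero_le_of_norm_le_add (fun j => by positivity) (fun j => nondegPart_nonneg a j)
    hx hG (norm_Fnl_le ha)).trans (add_le_add (le_of_eq ?_) ?_)
  · rw [show ∑' j, (2 * (∑' k, ‖a k‖ ^ 2) * ‖a j‖) ^ 2 = (2 * hnorm 0 a ^ 3) ^ 2 by
      simp_rw [mul_pow]; rw [tsum_mul_left, hSA]; ring]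
    exact Real.sqrt_sq (by positivity)
  · calc √(∑' j, nondegPart a j ^ 2)
        ≤ √(kernelConst β * (hnorm β a ^ 2 * hnorm 0 a ^ 2 * hnorm β a ^ 2)) :=
          Real.sqrt_le_sqrt hGle
      _ = √(kernelConst β) * hnorm 0 a * hnorm β a ^ 2 := by
        rw [Real.sqrt_mul (kernelConst_nonneg β),
          show hnorm β a ^ 2 * hnorm 0 a ^ 2 * hnorm β a ^ 2 =
            (hnorm 0 a * hnorm β a ^ 2) ^ 2 by ring,
          Real.sqrt_sq (by positivity), mul_assoc]

end ResonantNonlinearity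

open ResonantNonlinearity in
/-- `‖F(a)‖_{l²} ≤ C ‖a‖_{l²}^{3-2β} ‖a‖_{h¹}^{2β}` for every `3/4 < β < 1`,
i.e. `‖F(a)‖_{l²} ≲ ‖a‖_{l²}^{δ₁} ‖a‖_{h¹}^{3-δ₁}` with `δ₁ = 3 - 2β ∈ (1, 3/2)`. -/
theorem l2_interpolated_estimate_resonant_nonlinearity :
    ∀ β : ℝ, 3 / 4 < β → β < 1 → ∃ C : ℝ, ∀ a : ℤ × ℤ → ℂ, (Function.support a).Finite →
      hnorm 0 (Fnl a) ≤ C * hnorm 0 a ^ (3 - 2 * β) * hnorm 1 a ^ (2 * β) := by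
  intro β hβ hβ1
  refine ⟨2 + √(kernelConst β), fun a ha => ?_⟩
  have hinterp : hnorm β a ≤ hnorm 0 a ^ (1 - β) * hnorm 1 a ^ β := by
    simpa using hnorm_interpolate ha 0 1 (θ := β) (by linarith) hβ1.le
  exact (hnorm_zero_Fnl_le hβ ha).trans <| two_mul_pow_three_add_le (hnorm_nonneg 0 a)
    (hnorm_mono ha zero_le_one) (hnorm_nonneg β a) (by linarith) hβ1.le hinterp
    (Real.sqrt_nonneg _)
end
end

section
/- For every β > 3/4 there exists a constant C = C(β) such that for every center P ∈ ℝ², every radius R > 0 and every A > 1: ∑_{p ∈ ℤ², |p − P| = R, |p| ≥ A} ⟨p⟩^{−2β} ≤ C · A^{1 − 2β}, the sum being over the lattice points of ℤ² lying on the circle C(P,R) of radius R centered at P whose Euclidean norm is at least A. -/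
noncomputable section

attribute [local instance] Classical.propDecidable

open Finset

/-! Group the lattice points on the circle by their first coordinate `n`: a vertical line meets
the circle at most twice, and every such point `p` with `|p| ≥ A` has
`A² + n² ≤ 2 ⟨p⟩²`. Hence the sum is at most `4 · 2^β · ∑_{m ∈ ℕ} (A² + m²)^{-β}`. The at most
`A + 1` terms with `m ≤ A` are each at most `A^{-2β}`, and the terms with `m > A` are at most
`∑_{m > ⌊A⌋} m^{-2β} ≤ ∫_{⌊A⌋}^∞ x^{-2β} dx = O(A^{1-2β})`. -/

theorem Finset.sum_le_mul_sum_image {ι κ R : Type*} [DecidableEq κ] [CommSemiring R]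
    [PartialOrder R] [IsOrderedRing R] {s : Finset ι} {h : ι → κ} {f : ι → R} {g : κ → R}
    {k : ℕ} (hcard : ∀ c ∈ s.image h, #{a ∈ s | h a = c} ≤ k)
    (hfg : ∀ a ∈ s, f a ≤ g (h a)) (hg : ∀ c ∈ s.image h, 0 ≤ g c) :
    ∑ a ∈ s, f a ≤ k * ∑ c ∈ s.image h, g c := by
  rw [← sum_fiberwise_of_maps_to (fun a ha => mem_image_of_mem h ha) f, mul_sum]
  refine sum_le_sum fun c hc => ?_
  calc ∑ a ∈ s with h a = c, f a ≤ #{a ∈ s | h a = c} • g c :=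
        sum_le_card_nsmul _ _ _ fun a ha => (mem_filter.1 ha).2 ▸ hfg a (mem_filter.1 ha).1
    _ ≤ k * g c := by
        rw [nsmul_eq_mul]
        exact mul_le_mul_of_nonneg_right (Nat.mono_cast (hcard c hc)) (hg c hc)

theorem Finset.card_le_two_of_forall_sq_sub_eq {R : Type*} [CommRing R] [NoZeroDivisors R]
    [DecidableEq R] {s : Finset R} {c r : R} (hs : ∀ y ∈ s, (y - c) ^ 2 = r) : #s ≤ 2 := by
  obtain rfl | ⟨y₀, hy₀⟩ := s.eq_empty_or_nonempty
  · simp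
  refine (card_le_card fun y hy => ?_).trans (card_le_two (a := y₀) (b := 2 * c - y₀))
  have hroots : (y - y₀) * (y - (2 * c - y₀)) = 0 := by
    linear_combination hs y hy - hs y₀ hy₀
  rcases mul_eq_zero.1 hroots with h | h
  · simp [sub_eq_zero.1 h]
  · simp [sub_eq_zero.1 h]

theorem card_filter_fst_eq_le_two {S : Finset (ℤ × ℤ)} {P : ℝ × ℝ} {ρ : ℝ}
    (hS : ∀ p ∈ S, ((p.1 : ℝ) - P.1) ^ 2 + ((p.2 : ℝ) - P.2) ^ 2 = ρ) (n : ℤ) :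
    #{p ∈ S | p.1 = n} ≤ 2 := by
  have hinj : Set.InjOn (fun p : ℤ × ℤ => (p.2 : ℝ)) ↑{p ∈ S | p.1 = n} := by
    intro p hp q hq hpq
    simp only [coe_filter, Set.mem_ofPred_eq] at hp hq
    exact Prod.ext (hp.2.trans hq.2.symm) (Int.cast_injective hpq)
  rw [← card_image_of_injOn hinj]
  refine card_le_two_of_forall_sq_sub_eq (c := P.2) (r := ρ - ((n : ℝ) - P.1) ^ 2) ?_
  simp only [mem_image, mem_filter]
  rintro _ ⟨p, ⟨hp, rfl⟩, rfl⟩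
  linarith [hS p hp]

theorem Int.card_filter_natAbs_eq_le_two (T : Finset ℤ) (m : ℕ) :
    #{n ∈ T | n.natAbs = m} ≤ 2 := by
  refine (card_le_card fun n hn => ?_).trans (card_le_two (a := (m : ℤ)) (b := -m))
  rcases Int.natAbs_eq_iff.1 (mem_filter.1 hn).2 with h | h <;> simp [h]

theorem Real.rpow_neg_le_rpow_mul_rpow_neg {a b c β : ℝ} (hβ : 0 ≤ β) (ha : 0 < a) (hc : 0 < c)
    (hab : a ≤ c * b) : b ^ (-β) ≤ c ^ β * a ^ (-β) := by
  have hb : 0 < b := pos_of_mul_pos_right (ha.trans_le hab) hc.le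
  calc b ^ (-β) = c ^ β * (c * b) ^ (-β) := by
        rw [mul_rpow hc.le hb.le, rpow_neg hc.le, ← mul_assoc,
          mul_inv_cancel₀ (rpow_pos_of_pos hc β).ne', one_mul]
    _ ≤ c ^ β * a ^ (-β) :=
        mul_le_mul_of_nonneg_left (rpow_le_rpow_of_nonpos ha hab (neg_nonpos.2 hβ)) (by positivity)

theorem Real.sum_rpow_neg_le_of_lt {s : ℝ} (hs : 1 < s) {N : ℕ} (hN : 0 < N) {U : Finset ℕ}
    (hU : ∀ m ∈ U, N < m) : ∑ m ∈ U, (m : ℝ) ^ (-s) ≤ (N : ℝ) ^ (1 - s) / (s - 1) := by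
  set M := N + U.sup id
  have hsub : U ⊆ Ioc N M := fun m hm =>
    mem_Ioc.2 ⟨hU m hm, (le_sup (f := id) hm).trans (Nat.le_add_left _ _)⟩
  have hNM : N ≤ M := Nat.le_add_right _ _
  have hN' : (0 : ℝ) < N := by exact_mod_cast hN
  have hanti : AntitoneOn (fun x : ℝ => x ^ (-s)) (Set.Icc (N : ℝ) M) := fun x hx y _ hxy =>
    rpow_le_rpow_of_nonpos (hN'.trans_le hx.1) hxy (by linarith)
  calc ∑ m ∈ U, (m : ℝ) ^ (-s) ≤ ∑ m ∈ Ioc N M, (m : ℝ) ^ (-s) :=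
        sum_le_sum_of_subset_of_nonneg hsub fun m _ _ => by positivity
    _ = ∑ i ∈ Ico N M, ((i + 1 : ℕ) : ℝ) ^ (-s) := by
        rw [← Ico_add_one_add_one_eq_Ioc, ← sum_Ico_add' (fun m : ℕ => (m : ℝ) ^ (-s))]
    _ ≤ ∫ x in (N : ℝ)..M, x ^ (-s) := hanti.sum_le_integral_Ico hNM
    _ = ((N : ℝ) ^ (1 - s) - (M : ℝ) ^ (1 - s)) / (s - 1) := by
        rw [integral_rpow (Or.inr ⟨by linarith, Set.notMem_uIcc_of_lt hN' (by positivity)⟩),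
          show -s + 1 = 1 - s by ring, ← neg_div_neg_eq, neg_sub, neg_sub]
    _ ≤ (N : ℝ) ^ (1 - s) / (s - 1) := by
        gcongr
        exact sub_le_self _ (by positivity)

theorem Real.sq_rpow_neg {x : ℝ} (hx : 0 ≤ x) (β : ℝ) : (x ^ 2) ^ (-β) = x ^ (-(2 * β)) := by
  rw [← rpow_natCast, ← rpow_mul hx]
  ring_nf

theorem sum_rpow_neg_sq_add_sq_le_of_le {β A : ℝ} (hβ : 0 ≤ β) (hA : 1 ≤ A) {U : Finset ℕ}
    (hU : ∀ m ∈ U, (m : ℝ) ≤ A) : ∑ m ∈ U, (A ^ 2 + (m : ℝ) ^ 2) ^ (-β) ≤ 2 * A ^ (1 - 2 * β) := by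
  have hA0 : 0 < A := by linarith
  have hcard : (#U : ℝ) ≤ 2 * A := by
    have hsub : U ⊆ range (⌊A⌋₊ + 1) := fun m hm =>
      mem_range.2 (Nat.lt_succ_of_le (Nat.le_floor (hU m hm)))
    have : (#U : ℝ) ≤ ⌊A⌋₊ + 1 := by exact_mod_cast (card_le_card hsub).trans (card_range _).le
    linarith [Nat.floor_le hA0.le]
  have hterm : ∀ m ∈ U, (A ^ 2 + (m : ℝ) ^ 2) ^ (-β) ≤ A ^ (-(2 * β)) := fun m _ => by
    rw [← Real.sq_rpow_neg hA0.le]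
    exact Real.rpow_le_rpow_of_nonpos (pow_pos hA0 2) (by nlinarith) (by linarith)
  calc ∑ m ∈ U, (A ^ 2 + (m : ℝ) ^ 2) ^ (-β) ≤ #U • A ^ (-(2 * β)) := sum_le_card_nsmul _ _ _ hterm
    _ ≤ 2 * A * A ^ (-(2 * β)) := by
        rw [nsmul_eq_mul]
        exact mul_le_mul_of_nonneg_right hcard (by positivity)
    _ = 2 * A ^ (1 - 2 * β) := by
        rw [show 1 - 2 * β = -(2 * β) + 1 by ring, Real.rpow_add_one hA0.ne']
        ring

theorem sum_rpow_neg_sq_add_sq_le_of_lt {β A : ℝ} (hβ : 1 / 2 < β) (hA : 1 ≤ A) {U : Finset ℕ}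
    (hU : ∀ m ∈ U, A < m) :
    ∑ m ∈ U, (A ^ 2 + (m : ℝ) ^ 2) ^ (-β) ≤ 2 ^ (2 * β - 1) / (2 * β - 1) * A ^ (1 - 2 * β) := by
  have hA0 : 0 < A := by linarith
  have hfloor : 0 < ⌊A⌋₊ := Nat.floor_pos.2 hA
  have hhalf : A / 2 ≤ ⌊A⌋₊ := by
    have : (1 : ℝ) ≤ ⌊A⌋₊ := by exact_mod_cast hfloor
    linarith [Nat.lt_floor_add_one A]
  have hterm : ∀ m ∈ U, (A ^ 2 + (m : ℝ) ^ 2) ^ (-β) ≤ (m : ℝ) ^ (-(2 * β)) := fun m hm => by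
    rw [← Real.sq_rpow_neg (Nat.cast_nonneg m)]
    have hm : A < m := hU m hm
    exact Real.rpow_le_rpow_of_nonpos (pow_pos (hA0.trans hm) 2) (by nlinarith) (by linarith)
  calc ∑ m ∈ U, (A ^ 2 + (m : ℝ) ^ 2) ^ (-β) ≤ ∑ m ∈ U, (m : ℝ) ^ (-(2 * β)) := sum_le_sum hterm
    _ ≤ (⌊A⌋₊ : ℝ) ^ (1 - 2 * β) / (2 * β - 1) :=
        Real.sum_rpow_neg_le_of_lt (by linarith) hfloor fun m hm =>
          (Nat.floor_lt hA0.le).2 (hU m hm)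
    _ ≤ (A / 2) ^ (1 - 2 * β) / (2 * β - 1) :=
        div_le_div_of_nonneg_right
          (Real.rpow_le_rpow_of_nonpos (by positivity) hhalf (by linarith)) (by linarith)
    _ = 2 ^ (2 * β - 1) / (2 * β - 1) * A ^ (1 - 2 * β) := by
        rw [Real.div_rpow hA0.le zero_le_two, div_eq_mul_inv (A ^ _), ← Real.rpow_neg zero_le_two,
          neg_sub]
        ring

theorem Nat.sum_rpow_neg_sq_add_sq_le {β A : ℝ} (hβ : 1 / 2 < β) (hA : 1 ≤ A) (U : Finset ℕ) :
    ∑ m ∈ U, (A ^ 2 + (m : ℝ) ^ 2) ^ (-β) ≤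
      (2 + 2 ^ (2 * β - 1) / (2 * β - 1)) * A ^ (1 - 2 * β) := by
  rw [← sum_filter_add_sum_filter_not U (fun m : ℕ => (m : ℝ) ≤ A), add_mul]
  refine _root_.add_le_add ?_ ?_
  · exact sum_rpow_neg_sq_add_sq_le_of_le (by linarith) hA fun m hm => (mem_filter.1 hm).2
  · exact sum_rpow_neg_sq_add_sq_le_of_lt hβ hA fun m hm => lt_of_not_ge (mem_filter.1 hm).2

theorem Int.sum_rpow_neg_sq_add_sq_le {β A : ℝ} (hβ : 1 / 2 < β) (hA : 1 ≤ A) (T : Finset ℤ) :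
    ∑ n ∈ T, (A ^ 2 + (n : ℝ) ^ 2) ^ (-β) ≤
      2 * (2 + 2 ^ (2 * β - 1) / (2 * β - 1)) * A ^ (1 - 2 * β) := by
  calc ∑ n ∈ T, (A ^ 2 + (n : ℝ) ^ 2) ^ (-β)
      ≤ 2 * ∑ m ∈ T.image Int.natAbs, (A ^ 2 + (m : ℝ) ^ 2) ^ (-β) := by
        refine sum_le_mul_sum_image (fun m _ => card_filter_natAbs_eq_le_two T m)
          (fun n _ => le_of_eq ?_) (fun _ _ => by positivity)
        rw [Nat.cast_natAbs, Int.cast_abs, sq_abs]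
    _ ≤ 2 * ((2 + 2 ^ (2 * β - 1) / (2 * β - 1)) * A ^ (1 - 2 * β)) := by
        gcongr
        exact Nat.sum_rpow_neg_sq_add_sq_le hβ hA _
    _ = 2 * (2 + 2 ^ (2 * β - 1) / (2 * β - 1)) * A ^ (1 - 2 * β) := by ring

theorem sum_rpow_neg_one_add_sq_add_sq_le {S : Finset (ℤ × ℤ)} {P : ℝ × ℝ} {ρ β A : ℝ}
    (hβ : 0 ≤ β) (hA : 0 < A)
    (hS : ∀ p ∈ S, ((p.1 : ℝ) - P.1) ^ 2 + ((p.2 : ℝ) - P.2) ^ 2 = ρ ∧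
      A ^ 2 ≤ (p.1 : ℝ) ^ 2 + (p.2 : ℝ) ^ 2) :
    ∑ p ∈ S, (1 + ((p.1 : ℝ) ^ 2 + (p.2 : ℝ) ^ 2)) ^ (-β) ≤
      2 * 2 ^ β * ∑ n ∈ S.image Prod.fst, (A ^ 2 + (n : ℝ) ^ 2) ^ (-β) := by
  rw [mul_assoc, mul_sum]
  refine sum_le_mul_sum_image (fun n _ => card_filter_fst_eq_le_two (fun p hp => (hS p hp).1) n)
    (fun p hp => ?_) (fun _ _ => by positivity)
  exact Real.rpow_neg_le_rpow_mul_rpow_neg hβ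
    (add_pos_of_pos_of_nonneg (pow_pos hA 2) (sq_nonneg _)) two_pos (by nlinarith [(hS p hp).2, sq_nonneg (p.2 : ℝ)])

theorem Int.mem_Icc_ceil_floor_of_sq_sub_le {n : ℤ} {x r : ℝ} (hr : 0 ≤ r)
    (h : ((n : ℝ) - x) ^ 2 ≤ r ^ 2) : n ∈ Icc ⌈x - r⌉ ⌊x + r⌋ := by
  obtain ⟨h₁, h₂⟩ := abs_le_of_sq_le_sq' h hr
  exact mem_Icc.2 ⟨Int.ceil_le.2 (by linarith), Int.le_floor.2 (by linarith)⟩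

/-- For `β > 3/4` there is `C = C(β)` such that for every circle `C(P,R)` in `ℝ²` and
every `A > 1`, the sum of `⟨p⟩^{-2β}` over lattice points `p ∈ ℤ²` lying on the circle
with `|p| ≥ A` is at most `C · A^{1-2β}`. -/
theorem lattice_points_on_circle_sum :
    ∀ β : ℝ, 3 / 4 < β → ∃ C : ℝ, ∀ (P : ℝ × ℝ) (R A : ℝ), 0 < R → 1 < A →
      (∑' p : ℤ × ℤ,
        if Real.sqrt (((p.1 : ℝ) - P.1) ^ 2 + ((p.2 : ℝ) - P.2) ^ 2) = R ∧
            A ≤ Real.sqrt ((p.1 : ℝ) ^ 2 + (p.2 : ℝ) ^ 2) then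
          ((1 : ℝ) + ((p.1 : ℝ) ^ 2 + (p.2 : ℝ) ^ 2)) ^ (-β)
        else 0) ≤ C * A ^ (1 - 2 * β) := by
  intro β hβ
  have hβ₁ : 1 / 2 < β := by linarith
  have hβ₀ : 0 ≤ β := by linarith
  refine ⟨2 * 2 ^ β * (2 * (2 + 2 ^ (2 * β - 1) / (2 * β - 1))), fun P R A hR hA => ?_⟩
  have hcircle : ∀ p : ℤ × ℤ, Real.sqrt (((p.1 : ℝ) - P.1) ^ 2 + ((p.2 : ℝ) - P.2) ^ 2) = R ↔
      ((p.1 : ℝ) - P.1) ^ 2 + ((p.2 : ℝ) - P.2) ^ 2 = R ^ 2 := fun p =>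
    Real.sqrt_eq_iff_eq_sq (by positivity) hR.le
  have hnorm : ∀ p : ℤ × ℤ, A ≤ Real.sqrt ((p.1 : ℝ) ^ 2 + (p.2 : ℝ) ^ 2) ↔
      A ^ 2 ≤ (p.1 : ℝ) ^ 2 + (p.2 : ℝ) ^ 2 := fun p =>
    Real.le_sqrt (by linarith) (by positivity)
  simp only [hcircle, hnorm]
  rw [tsum_eq_sum (s := Icc ⌈P.1 - R⌉ ⌊P.1 + R⌋ ×ˢ Icc ⌈P.2 - R⌉ ⌊P.2 + R⌋), ← sum_filter]
  · calc _ ≤ 2 * 2 ^ β * ∑ n ∈ (_ : Finset ℤ), (A ^ 2 + (n : ℝ) ^ 2) ^ (-β) :=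
          sum_rpow_neg_one_add_sq_add_sq_le hβ₀ (by linarith) fun p hp => (mem_filter.1 hp).2
      _ ≤ 2 * 2 ^ β * (2 * (2 + 2 ^ (2 * β - 1) / (2 * β - 1)) * A ^ (1 - 2 * β)) := by
          gcongr
          exact Int.sum_rpow_neg_sq_add_sq_le hβ₁ hA.le _
      _ = _ := by ring
  · intro p hp
    refine if_neg fun h => hp (mem_product.2 ⟨?_, ?_⟩)
    · exact Int.mem_Icc_ceil_floor_of_sq_sub_le hR.le
        (by linarith [h.1, sq_nonneg ((p.2 : ℝ) - P.2)])
    · exact Int.mem_Icc_ceil_floor_of_sq_sub_le hR.le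
        (by linarith [h.1, sq_nonneg ((p.1 : ℝ) - P.1)])
end
end
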